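/- arXiv:1311.4985 — 7 statements merged into one kernel-verified Lean document; each statement's English description precedes it below -/
import Mathlib

section
/- Let n ≥ 3, let L = σx⊗σx + σy⊗σy + σz⊗σz ∈ M₂(ℂ)^{⊗2}, and for j ∈ ZMod n let D_j be the dissipator D_L acting on sites (j, j+1) of the n-qubit ring (identity elsewhere). Then the translationally invariant Liouvillian ℒ = Σ_{j∈ZMod n} D_j globally conserves all single-site operators: ℒ(𝟙^{⊗n}) = 0 and, for each α ∈ {x, y, z}, ℒ(Σ_{k∈ZMod n} σ^α_k) = 0, where σ^α_k denotes σ^α acting on site k and identity elsewhere. -/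
open Matrix Complex

noncomputable section

/-- Pauli matrices. -/
def σx : Matrix (Fin 2) (Fin 2) ℂ := !![0, 1; 1, 0]
def σy : Matrix (Fin 2) (Fin 2) ℂ := !![0, -Complex.I; Complex.I, 0]
def σz : Matrix (Fin 2) (Fin 2) ℂ := !![1, 0; 0, -1]

/-- Operators on `r` qubits: the `r`-fold tensor power of `M₂(ℂ)`. -/
abbrev QOp (r : ℕ) := Matrix (Fin r → Fin 2) (Fin r → Fin 2) ℂ

/-- Operators on a ring of `n` qubits. -/
abbrev ROp (n : ℕ) := Matrix (ZMod n → Fin 2) (ZMod n → Fin 2) ℂ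

/-- The Lindblad dissipator `D_L(ρ) = [Lρ, L†] + [L, ρL†]`. -/
def dissipator {I : Type*} [Fintype I] (L ρ : Matrix I I ℂ) : Matrix I I ℂ :=
  (L * ρ * Lᴴ - Lᴴ * (L * ρ)) + (L * (ρ * Lᴴ) - ρ * Lᴴ * L)

/-- `𝓛` is a Lindblad generator: `𝓛(ρ) = i(ρH − Hρ) + Σ_k D_{L_k}(ρ)` for a Hermitian `H`
and a finite family of Lindblad operators. -/
def IsLindblad {I : Type*} [Fintype I] (𝓛 : Matrix I I ℂ → Matrix I I ℂ) : Prop :=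
  ∃ H : Matrix I I ℂ, H.IsHermitian ∧ ∃ (m : ℕ) (Ls : Fin m → Matrix I I ℂ),
    ∀ ρ, 𝓛 ρ = Complex.I • (ρ * H - H * ρ) + ∑ k, dissipator (Ls k) ρ

/-- Tensor (Kronecker) product of two single-qubit operators, as a two-qubit operator. -/
def kron2 (A B : Matrix (Fin 2) (Fin 2) ℂ) : QOp 2 :=
  Matrix.of fun x y => A (x 0) (y 0) * B (x 1) (y 1)

/-- Tensor product of `m` single-qubit operators. -/
def kronPow {m : ℕ} (f : Fin m → Matrix (Fin 2) (Fin 2) ℂ) : QOp m :=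
  Matrix.of fun x y => ∏ i, f i (x i) (y i)

variable {n : ℕ}

/-- `b` acting on the `r` consecutive sites `j, j+1, …, j+r−1` (mod `n`) of the ring,
and as identity on all other sites. -/
def embWin [NeZero n] (r : ℕ) (j : ZMod n) (b : QOp r) : ROp n :=
  Matrix.of fun x y =>
    (∏ s : ZMod n, if ∃ i : Fin r, s = j + (i.val : ZMod n) then (1 : ℂ)
      else if x s = y s then 1 else 0) *
    b (fun i => x (j + (i.val : ZMod n))) (fun i => y (j + (i.val : ZMod n)))

/-- Replace the values of a ring configuration on the window `j,…,j+r−1` by `u`. -/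
def patch (r : ℕ) (j : ZMod n) (x : ZMod n → Fin 2) (u : Fin r → Fin 2) : ZMod n → Fin 2 :=
  fun s => if h : ∃ i : Fin r, s = j + (i.val : ZMod n) then u h.choose else x s

/-- The (linear) map `𝓛` on `r`-site operators, acting as `𝓛` on the tensor factors of the
sites `j,…,j+r−1` of the ring and as the identity map on all other tensor factors. -/
def embMap [NeZero n] (r : ℕ) (j : ZMod n) (𝓛 : QOp r → QOp r) (M : ROp n) : ROp n :=
  Matrix.of fun x y =>
    (∏ s : ZMod n, if ∃ i : Fin r, s = j + (i.val : ZMod n) then (1 : ℂ)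
      else if x s = y s then 1 else 0) *
    𝓛 (Matrix.of fun u u' => M (patch r j x u) (patch r j y u'))
      (fun i => x (j + (i.val : ZMod n))) (fun i => y (j + (i.val : ZMod n)))

/-- A single-qubit operator `b` acting on site `k` of the ring, identity elsewhere. -/
def embSite [NeZero n] (k : ZMod n) (b : Matrix (Fin 2) (Fin 2) ℂ) : ROp n :=
  Matrix.of fun x y =>
    (∏ s : ZMod n, if s = k then (1 : ℂ) else if x s = y s then 1 else 0) * b (x k) (y k)

/-- A (linear) map `𝓛` on single-qubit operators acting on site `j` of the ring,
identity map on all other tensor factors. -/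
def embMapSite [NeZero n] (j : ZMod n)
    (𝓛 : Matrix (Fin 2) (Fin 2) ℂ → Matrix (Fin 2) (Fin 2) ℂ) (M : ROp n) : ROp n :=
  Matrix.of fun x y =>
    (∏ s : ZMod n, if s = j then (1 : ℂ) else if x s = y s then 1 else 0) *
    𝓛 (Matrix.of fun u u' => M (Function.update x j u) (Function.update y j u')) (x j) (y j)

/-! ### Auxiliary lemmas -/

lemma sum_fun2 (g : (Fin 2 → Fin 2) → ℂ) :
    ∑ f, g f = g ![0,0] + g ![0,1] + g ![1,0] + g ![1,1] := by
  rw [← (piFinTwoEquiv fun _ => Fin 2).symm.sum_comp]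
  simp only [Fintype.sum_prod_type, Fin.sum_univ_two, piFinTwoEquiv, Equiv.coe_fn_symm_mk]
  have h : ∀ a b : Fin 2, (Fin.cons a (Fin.cons b finZeroElim) : Fin 2 → Fin 2) = ![a,b] := by
    intro a b; funext i; fin_cases i <;> rfl
  rw [h, h, h, h]; ring

lemma fun2_eq (f : Fin 2 → Fin 2) : f = ![f 0, f 1] := by
  funext i; fin_cases i <;> rfl

lemma one_eq_kron2 : (1 : QOp 2) = kron2 1 1 := by
  ext x y
  by_cases h0 : x 0 = y 0 <;> by_cases h1 : x 1 = y 1 <;>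
    simp [Matrix.one_apply, kron2, h0, h1, funext_iff, Fin.forall_fin_two]

/-- The swap matrix on two qubits. -/
def Pm : QOp 2 := Matrix.of fun x y => if x 0 = y 1 ∧ x 1 = y 0 then 1 else 0

lemma Pm_herm : Pmᴴ = Pm := by
  ext x y
  by_cases h : x 0 = y 1 ∧ x 1 = y 0
  · simp [conjTranspose_apply, Pm, h.1, h.2]
  · have h' : ¬ (y 0 = x 1 ∧ y 1 = x 0) := by tauto
    simp [conjTranspose_apply, Pm, h, h']

lemma Pm_mul (M : QOp 2) (x y : Fin 2 → Fin 2) : (Pm * M) x y = M ![x 1, x 0] y := by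
  rw [Matrix.mul_apply]
  have h : ∀ f : Fin 2 → Fin 2, Pm x f * M f y = (if f = ![x 1, x 0] then M f y else 0) := by
    intro f
    have hc : (x 0 = f 1 ∧ x 1 = f 0) ↔ f = ![x 1, x 0] := by
      constructor
      · rintro ⟨h1, h2⟩; funext i; fin_cases i <;> simp [h1.symm, h2.symm]
      · rintro rfl; simp
    by_cases hf : f = ![x 1, x 0] <;> simp [Pm, hc, hf]
  simp_rw [h]
  simp

lemma mul_Pm (M : QOp 2) (x y : Fin 2 → Fin 2) : (M * Pm) x y = M x ![y 1, y 0] := by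
  rw [Matrix.mul_apply]
  have h : ∀ f : Fin 2 → Fin 2, M x f * Pm f y = (if f = ![y 1, y 0] then M x f else 0) := by
    intro f
    have hc : (f 0 = y 1 ∧ f 1 = y 0) ↔ f = ![y 1, y 0] := by
      constructor
      · rintro ⟨h1, h2⟩; funext i; fin_cases i <;> simp [h1, h2]
      · rintro rfl; simp
    by_cases hf : f = ![y 1, y 0] <;> simp [Pm, hc, hf]
  simp_rw [h]
  simp

lemma Pm_sq : Pm * Pm = 1 := by
  ext x y
  rw [Pm_mul]
  by_cases h0 : x 0 = y 0 <;> by_cases h1 : x 1 = y 1 <;>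
    simp [Pm, Matrix.one_apply, h0, h1, funext_iff, Fin.forall_fin_two]

lemma Pm_conj_kron2 (A B : Matrix (Fin 2) (Fin 2) ℂ) : Pm * kron2 A B * Pm = kron2 B A := by
  ext x y
  rw [mul_Pm, Pm_mul]
  simp [kron2, mul_comm]

lemma hLP (L : QOp 2) (hL : L = kron2 σx σx + kron2 σy σy + kron2 σz σz) :
    L = (2:ℂ) • Pm - 1 := by
  subst hL
  rw [one_eq_kron2]
  ext x y
  rw [fun2_eq x, fun2_eq y]
  generalize x 0 = a; generalize x 1 = b; generalize y 0 = c; generalize y 1 = d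
  fin_cases a <;> fin_cases b <;> fin_cases c <;> fin_cases d <;>
    norm_num [kron2, σx, σy, σz, Pm, funext_iff, Fin.forall_fin_two, Matrix.one_apply]

lemma Dalg {I : Type*} [Fintype I] [DecidableEq I] (P ρ : Matrix I I ℂ)
    (hP : Pᴴ = P) (hPP : P * P = 1) :
    dissipator ((2:ℂ) • P - 1) ρ = (8:ℂ) • (P * ρ * P) - (8:ℂ) • ρ := by
  have hH : ((2:ℂ) • P - 1)ᴴ = (2:ℂ) • P - 1 := by
    simp [conjTranspose_smul, hP]
  rw [dissipator, hH]
  have eLL : ((2:ℂ) • P - 1) * ((2:ℂ) • P - 1) = (5:ℂ) • 1 - (4:ℂ) • P := by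
    simp only [Matrix.sub_mul, Matrix.mul_sub, Matrix.smul_mul, Matrix.mul_smul,
      Matrix.one_mul, Matrix.mul_one, hPP, smul_smul]
    module
  have e1 : ((2:ℂ) • P - 1) * ρ * ((2:ℂ) • P - 1)
      = (4:ℂ) • (P * ρ * P) - (2:ℂ) • (P * ρ) - (2:ℂ) • (ρ * P) + ρ := by
    simp only [Matrix.sub_mul, Matrix.mul_sub, Matrix.smul_mul, Matrix.mul_smul,
      Matrix.one_mul, Matrix.mul_one, smul_smul]
    module
  have e2 : ((2:ℂ) • P - 1) * (((2:ℂ) • P - 1) * ρ) = (5:ℂ) • ρ - (4:ℂ) • (P * ρ) := by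
    rw [← Matrix.mul_assoc, eLL, Matrix.sub_mul, Matrix.smul_mul, Matrix.smul_mul,
      Matrix.one_mul]
  have e3 : ((2:ℂ) • P - 1) * (ρ * ((2:ℂ) • P - 1)) = ((2:ℂ) • P - 1) * ρ * ((2:ℂ) • P - 1) := by
    rw [Matrix.mul_assoc]
  have e4 : ρ * ((2:ℂ) • P - 1) * ((2:ℂ) • P - 1) = (5:ℂ) • ρ - (4:ℂ) • (ρ * P) := by
    rw [Matrix.mul_assoc, eLL, Matrix.mul_sub, Matrix.mul_smul, Matrix.mul_smul,
      Matrix.mul_one]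
  rw [e2, e3, e4, e1]
  module

lemma Dform (L : QOp 2) (hL : L = kron2 σx σx + kron2 σy σy + kron2 σz σz) (ρ : QOp 2) :
    dissipator L ρ = (8:ℂ) • (Pm * ρ * Pm) - (8:ℂ) • ρ := by
  rw [hLP L hL]
  exact Dalg Pm ρ Pm_herm Pm_sq

lemma core0 (L : QOp 2) (hL : L = kron2 σx σx + kron2 σy σy + kron2 σz σz) :
    dissipator L (1 : QOp 2) = 0 := by
  rw [Dform L hL, Matrix.mul_one, Pm_sq, sub_self]

lemma coreA (L : QOp 2) (hL : L = kron2 σx σx + kron2 σy σy + kron2 σz σz)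
    (α : Matrix (Fin 2) (Fin 2) ℂ) :
    dissipator L (kron2 α 1 + kron2 1 α) = 0 := by
  rw [Dform L hL, Matrix.mul_add, Matrix.add_mul, Pm_conj_kron2, Pm_conj_kron2,
    add_comm (kron2 1 α), sub_self]

lemma dissipator_smul {I : Type*} [Fintype I] (L : Matrix I I ℂ) (c : ℂ) (ρ : Matrix I I ℂ) :
    dissipator L (c • ρ) = c • dissipator L ρ := by
  simp [dissipator, Matrix.mul_smul, Matrix.smul_mul, smul_sub, smul_add]

lemma dissipator_add {I : Type*} [Fintype I] (L ρ σ : Matrix I I ℂ) :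
    dissipator L (ρ + σ) = dissipator L ρ + dissipator L σ := by
  simp only [dissipator, Matrix.mul_add, Matrix.add_mul]
  abel

lemma prodBoole2 {β : Type*} [Fintype β] (p q : β → Prop) [DecidablePred p]
    [DecidablePred q] :
    (∏ s : β, if p s then (1:ℂ) else if q s then 1 else 0)
      = if ∀ s, p s ∨ q s then 1 else 0 := by
  have h : ∀ s, (if p s then (1:ℂ) else if q s then 1 else 0) = if p s ∨ q s then 1 else 0 := by
    intro s; by_cases hp : p s <;> by_cases hq : q s <;> simp [hp, hq]
  simp_rw [h]
  rw [Finset.prod_boole]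
  simp

/-! ### Window and patch lemmas -/

lemma win_inj (hn : 3 ≤ n) (j : ZMod n) (i i' : Fin 2)
    (h : j + (i.val : ZMod n) = j + ((i'.val : ℕ) : ZMod n)) : i = i' := by
  have h2 : ((i.val : ℕ) : ZMod n) = ((i'.val : ℕ) : ZMod n) := add_left_cancel h
  have h3 := congrArg ZMod.val h2
  rw [ZMod.val_natCast_of_lt (by omega), ZMod.val_natCast_of_lt (by omega)] at h3
  exact Fin.ext h3

lemma win_iff (hn : 3 ≤ n) (j : ZMod n) (s : ZMod n) :
    (∃ i : Fin 2, s = j + ((i.val : ℕ) : ZMod n)) ↔ s = j ∨ s = j + 1 := by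
  constructor
  · rintro ⟨i, rfl⟩
    fin_cases i
    · left; simp
    · right; simp
  · rintro (rfl | rfl)
    · exact ⟨0, by simp⟩
    · exact ⟨1, by simp⟩

lemma jsucc_ne (hn : 3 ≤ n) (j : ZMod n) : j + 1 ≠ j := by
  haveI : Fact (1 < n) := ⟨by omega⟩
  intro h
  have h1 : j + 1 = j + 0 := h.trans (add_zero j).symm
  exact one_ne_zero (add_left_cancel h1)

lemma patch_mem (hn : 3 ≤ n) (j : ZMod n) (x : ZMod n → Fin 2) (u : Fin 2 → Fin 2) (i : Fin 2) :
    patch 2 j x u (j + ((i.val : ℕ) : ZMod n)) = u i := by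
  have hs : ∃ i' : Fin 2, j + ((i.val : ℕ) : ZMod n) = j + ((i'.val : ℕ) : ZMod n) := ⟨i, rfl⟩
  rw [patch, dif_pos hs]
  rw [← win_inj hn j i hs.choose hs.choose_spec]

lemma patch_at0 (hn : 3 ≤ n) (j : ZMod n) (x : ZMod n → Fin 2) (u : Fin 2 → Fin 2) :
    patch 2 j x u j = u 0 := by
  simpa using patch_mem hn j x u 0

lemma patch_at1 (hn : 3 ≤ n) (j : ZMod n) (x : ZMod n → Fin 2) (u : Fin 2 → Fin 2) :
    patch 2 j x u (j + 1) = u 1 := by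
  simpa using patch_mem hn j x u 1

lemma patch_not_mem (j : ZMod n) (x : ZMod n → Fin 2) (u : Fin 2 → Fin 2) (s : ZMod n)
    (hs : ¬ ∃ i : Fin 2, s = j + ((i.val : ℕ) : ZMod n)) :
    patch 2 j x u s = x s := dif_neg hs

lemma patch_eq_iff (hn : 3 ≤ n) (j : ZMod n) (x y : ZMod n → Fin 2) (u u' : Fin 2 → Fin 2) :
    patch 2 j x u = patch 2 j y u' ↔
      (u = u' ∧ ∀ s : ZMod n, (∃ i : Fin 2, s = j + ((i.val : ℕ) : ZMod n)) ∨ x s = y s) := by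
  constructor
  · intro h
    constructor
    · funext i
      have := congrFun h (j + ((i.val : ℕ) : ZMod n))
      rwa [patch_mem hn j, patch_mem hn j] at this
    · intro s
      by_cases hs : ∃ i : Fin 2, s = j + ((i.val : ℕ) : ZMod n)
      · exact Or.inl hs
      · right
        have := congrFun h s
        rwa [patch_not_mem j x u s hs, patch_not_mem j y u' s hs] at this
  · rintro ⟨h1, h2⟩
    funext s
    by_cases hs : ∃ i : Fin 2, s = j + ((i.val : ℕ) : ZMod n)
    · obtain ⟨i, rfl⟩ := hs
      rw [patch_mem hn j, patch_mem hn j, h1]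
    · rw [patch_not_mem j x u s hs, patch_not_mem j y u' s hs]
      rcases h2 s with h | h
      · exact absurd h hs
      · exact h

/-! ### Condition equivalences -/

lemma condA (hn : 3 ≤ n) (j : ZMod n) (x y : ZMod n → Fin 2) (u u' : Fin 2 → Fin 2) :
    (∀ s : ZMod n, s = j ∨ patch 2 j x u s = patch 2 j y u' s) ↔
      (u 1 = u' 1 ∧ ∀ s : ZMod n, (∃ i : Fin 2, s = j + ((i.val : ℕ) : ZMod n)) ∨ x s = y s) := by
  constructor
  · intro h
    constructor
    · rcases h (j + 1) with h' | h'
      · exact absurd h' (jsucc_ne hn j)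
      · rwa [patch_at1 hn, patch_at1 hn] at h'
    · intro s
      by_cases hs : ∃ i : Fin 2, s = j + ((i.val : ℕ) : ZMod n)
      · exact Or.inl hs
      · right
        rcases h s with hsj | h'
        · exact absurd ((win_iff hn j s).mpr (Or.inl hsj)) hs
        · rwa [patch_not_mem j x u s hs, patch_not_mem j y u' s hs] at h'
  · rintro ⟨h1, h2⟩ s
    by_cases hsj : s = j
    · exact Or.inl hsj
    · right
      by_cases hs : ∃ i : Fin 2, s = j + ((i.val : ℕ) : ZMod n)
      · rcases (win_iff hn j s).mp hs with rfl | rfl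
        · exact absurd rfl hsj
        · rw [patch_at1 hn, patch_at1 hn, h1]
      · rw [patch_not_mem j x u s hs, patch_not_mem j y u' s hs]
        rcases h2 s with h | h
        · exact absurd h hs
        · exact h

lemma condB (hn : 3 ≤ n) (j : ZMod n) (x y : ZMod n → Fin 2) (u u' : Fin 2 → Fin 2) :
    (∀ s : ZMod n, s = j + 1 ∨ patch 2 j x u s = patch 2 j y u' s) ↔
      (u 0 = u' 0 ∧ ∀ s : ZMod n, (∃ i : Fin 2, s = j + ((i.val : ℕ) : ZMod n)) ∨ x s = y s) := by
  constructor
  · intro h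
    constructor
    · rcases h j with h' | h'
      · exact absurd h'.symm (jsucc_ne hn j)
      · rwa [patch_at0 hn, patch_at0 hn] at h'
    · intro s
      by_cases hs : ∃ i : Fin 2, s = j + ((i.val : ℕ) : ZMod n)
      · exact Or.inl hs
      · right
        rcases h s with hsj | h'
        · exact absurd ((win_iff hn j s).mpr (Or.inr hsj)) hs
        · rwa [patch_not_mem j x u s hs, patch_not_mem j y u' s hs] at h'
  · rintro ⟨h1, h2⟩ s
    by_cases hsj : s = j + 1
    · exact Or.inl hsj
    · right
      by_cases hs : ∃ i : Fin 2, s = j + ((i.val : ℕ) : ZMod n)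
      · rcases (win_iff hn j s).mp hs with rfl | rfl
        · rw [patch_at0 hn, patch_at0 hn, h1]
        · exact absurd rfl hsj
      · rw [patch_not_mem j x u s hs, patch_not_mem j y u' s hs]
        rcases h2 s with h | h
        · exact absurd h hs
        · exact h

lemma condC (hn : 3 ≤ n) (j : ZMod n) (x y : ZMod n → Fin 2) (u u' : Fin 2 → Fin 2)
    (k : ZMod n) (hk : ¬ ∃ i : Fin 2, k = j + ((i.val : ℕ) : ZMod n)) :
    (∀ s : ZMod n, s = k ∨ patch 2 j x u s = patch 2 j y u' s) ↔
      (u = u' ∧ ∀ s : ZMod n,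
        s = k ∨ (∃ i : Fin 2, s = j + ((i.val : ℕ) : ZMod n)) ∨ x s = y s) := by
  constructor
  · intro h
    constructor
    · funext i
      have hw : j + ((i.val : ℕ) : ZMod n) ≠ k := fun he => hk ⟨i, he.symm⟩
      rcases h (j + ((i.val : ℕ) : ZMod n)) with h' | h'
      · exact absurd h' hw
      · rwa [patch_mem hn j, patch_mem hn j] at h'
    · intro s
      by_cases hsk : s = k
      · exact Or.inl hsk
      · right
        by_cases hs : ∃ i : Fin 2, s = j + ((i.val : ℕ) : ZMod n)
        · exact Or.inl hs
        · right
          rcases h s with hsk' | h'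
          · exact absurd hsk' hsk
          · rwa [patch_not_mem j x u s hs, patch_not_mem j y u' s hs] at h'
  · rintro ⟨h1, h2⟩ s
    by_cases hsk : s = k
    · exact Or.inl hsk
    · right
      by_cases hs : ∃ i : Fin 2, s = j + ((i.val : ℕ) : ZMod n)
      · obtain ⟨i, rfl⟩ := hs
        rw [patch_mem hn j, patch_mem hn j, h1]
      · rw [patch_not_mem j x u s hs, patch_not_mem j y u' s hs]
        rcases h2 s with h | h | h
        · exact absurd h hsk
        · exact absurd h hs
        · exact h

/-! ### Inner-matrix decompositions -/

lemma inner_one [NeZero n] (hn : 3 ≤ n) (j : ZMod n) (x y : ZMod n → Fin 2) :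
    (Matrix.of fun u u' => (1 : ROp n) (patch 2 j x u) (patch 2 j y u'))
      = (if ∀ s : ZMod n, (∃ i : Fin 2, s = j + ((i.val : ℕ) : ZMod n)) ∨ x s = y s
          then (1:ℂ) else 0) • (1 : QOp 2) := by
  ext u u'
  simp only [Matrix.of_apply, Matrix.smul_apply, Matrix.one_apply, smul_eq_mul]
  simp only [patch_eq_iff hn j x y u u']
  by_cases hq : ∀ s : ZMod n, (∃ i : Fin 2, s = j + ((i.val : ℕ) : ZMod n)) ∨ x s = y s <;>
    by_cases huu : u = u' <;>
      simp [hq, huu]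

lemma inner_site [NeZero n] (hn : 3 ≤ n) (j : ZMod n) (α : Matrix (Fin 2) (Fin 2) ℂ)
    (x y : ZMod n → Fin 2) :
    (Matrix.of fun u u' => (∑ k : ZMod n, embSite k α) (patch 2 j x u) (patch 2 j y u'))
      = (if ∀ s : ZMod n, (∃ i : Fin 2, s = j + ((i.val : ℕ) : ZMod n)) ∨ x s = y s
          then (1:ℂ) else 0) • (kron2 α 1 + kron2 1 α)
        + (∑ k ∈ Finset.univ.filter
              (fun k : ZMod n => ¬ ∃ i : Fin 2, k = j + ((i.val : ℕ) : ZMod n)),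
            (if ∀ s : ZMod n,
                s = k ∨ (∃ i : Fin 2, s = j + ((i.val : ℕ) : ZMod n)) ∨ x s = y s
              then (1:ℂ) else 0) * α (x k) (y k)) • (1 : QOp 2) := by
  ext u u'
  simp only [Matrix.of_apply, Matrix.sum_apply, Matrix.add_apply, Matrix.smul_apply,
    smul_eq_mul]
  have hemb : ∀ k : ZMod n, embSite k α (patch 2 j x u) (patch 2 j y u')
      = (if ∀ s : ZMod n, s = k ∨ patch 2 j x u s = patch 2 j y u' s then (1:ℂ) else 0)
          * α (patch 2 j x u k) (patch 2 j y u' k) := by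
    intro k
    rw [embSite]
    simp only [Matrix.of_apply]
    rw [prodBoole2]
  simp_rw [hemb]
  rw [← Finset.sum_filter_add_sum_filter_not Finset.univ
    (fun k : ZMod n => ∃ i : Fin 2, k = j + ((i.val : ℕ) : ZMod n))]
  have hfil : Finset.univ.filter
      (fun k : ZMod n => ∃ i : Fin 2, k = j + ((i.val : ℕ) : ZMod n))
      = {j, j + 1} := by
    ext k
    simp [win_iff hn j k]
  have hjj : j ∉ ({j + 1} : Finset (ZMod n)) := by
    simp only [Finset.mem_singleton]
    exact fun h => jsucc_ne hn j h.symm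
  rw [hfil, Finset.sum_insert hjj, Finset.sum_singleton]
  have hA : (if ∀ s : ZMod n, s = j ∨ patch 2 j x u s = patch 2 j y u' s then (1:ℂ) else 0)
      * α (patch 2 j x u j) (patch 2 j y u' j)
      = (if ∀ s : ZMod n, (∃ i : Fin 2, s = j + ((i.val : ℕ) : ZMod n)) ∨ x s = y s
          then (1:ℂ) else 0) * kron2 α 1 u u' := by
    rw [patch_at0 hn, patch_at0 hn]
    simp only [condA hn j x y u u']
    by_cases h1 : u 1 = u' 1 <;>
      by_cases h2 : ∀ s : ZMod n, (∃ i : Fin 2, s = j + ((i.val : ℕ) : ZMod n)) ∨ x s = y s <;>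
        simp [h1, h2, kron2, Matrix.one_apply]
  have hB : (if ∀ s : ZMod n, s = j + 1 ∨ patch 2 j x u s = patch 2 j y u' s then (1:ℂ) else 0)
      * α (patch 2 j x u (j + 1)) (patch 2 j y u' (j + 1))
      = (if ∀ s : ZMod n, (∃ i : Fin 2, s = j + ((i.val : ℕ) : ZMod n)) ∨ x s = y s
          then (1:ℂ) else 0) * kron2 1 α u u' := by
    rw [patch_at1 hn, patch_at1 hn]
    simp only [condB hn j x y u u']
    by_cases h1 : u 0 = u' 0 <;>
      by_cases h2 : ∀ s : ZMod n, (∃ i : Fin 2, s = j + ((i.val : ℕ) : ZMod n)) ∨ x s = y s <;>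
        simp [h1, h2, kron2, Matrix.one_apply]
  have hC : ∀ k ∈ Finset.univ.filter
      (fun k : ZMod n => ¬ ∃ i : Fin 2, k = j + ((i.val : ℕ) : ZMod n)),
      (if ∀ s : ZMod n, s = k ∨ patch 2 j x u s = patch 2 j y u' s then (1:ℂ) else 0)
        * α (patch 2 j x u k) (patch 2 j y u' k)
      = ((if ∀ s : ZMod n,
            s = k ∨ (∃ i : Fin 2, s = j + ((i.val : ℕ) : ZMod n)) ∨ x s = y s
          then (1:ℂ) else 0) * α (x k) (y k)) * (if u = u' then (1:ℂ) else 0) := by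
    intro k hk
    rw [Finset.mem_filter] at hk
    rw [patch_not_mem j x u k hk.2, patch_not_mem j y u' k hk.2]
    simp only [condC hn j x y u u' k hk.2]
    by_cases h1 : u = u' <;>
      by_cases h2 : ∀ s : ZMod n,
          s = k ∨ (∃ i : Fin 2, s = j + ((i.val : ℕ) : ZMod n)) ∨ x s = y s <;>
        simp [h1, h2, mul_comm]
  rw [hA, hB, Finset.sum_congr rfl hC, ← Finset.sum_mul]
  simp only [Matrix.one_apply]
  ring

/-! ### Main theorem -/

/-- the translationally invariant Liouvillian built from the Heisenberg
Lindblad operator `L = σx⊗σx + σy⊗σy + σz⊗σz` globally conserves the identity and all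
translationally invariant single-site operators `Σ_k σ^α_k`, `α ∈ {x,y,z}`. -/
theorem stmt2 (n : ℕ) [NeZero n] (hn : 3 ≤ n)
    (L : QOp 2) (hL : L = kron2 σx σx + kron2 σy σy + kron2 σz σz) :
    (∑ j : ZMod n, embMap 2 j (dissipator L) (1 : ROp n)) = 0 ∧
    (∀ α ∈ ({σx, σy, σz} : Set (Matrix (Fin 2) (Fin 2) ℂ)),
      (∑ j : ZMod n, embMap 2 j (dissipator L) (∑ k : ZMod n, embSite k α)) = 0) := by
  constructor
  · apply Finset.sum_eq_zero
    intro j _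
    ext x y
    simp only [embMap, Matrix.of_apply, Matrix.zero_apply]
    rw [inner_one hn j x y, dissipator_smul, core0 L hL]
    simp
  · intro α _
    apply Finset.sum_eq_zero
    intro j _
    ext x y
    simp only [embMap, Matrix.of_apply, Matrix.zero_apply]
    rw [inner_site hn j α x y, dissipator_add, dissipator_smul, dissipator_smul,
      coreA L hL α, core0 L hL]
    simp
end
end

section
/- Let r ≥ 1, n ≥ r + 2, and let a, b ∈ M₂(ℂ) be Hermitian matrices such that 𝟙, a, b are linearly independent. Let ℒ₀ be a Lindblad generator on M₂(ℂ)^{⊗r} and let ℒ_j denote its translate acting on sites j,…,j+r−1 of the n-qubit ring. If ℒ_j(a_k) = 0 and ℒ_j(b_k) = 0 for all sites j, k ∈ ZMod n (local conservation of both translationally invariant 1-local operators), then ℒ₀ = 0. (It is impossible to locally conserve two linearly independent non-identity 1-site operators by a nontrivial translationally invariant r-local Lindblad equation.) -/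
/-!
Freeze a ring configuration to a constant `t` outside the window `0, …, r-1`. Since `n > r`,
this turns the conservation laws into `𝓛(a_i) = 𝓛(b_i) = 0` for the single-site operators
`a_i, b_i` of the window and, through the site `r` outside it, into `𝓛(a_tt 𝟙) = 𝓛(b_tt 𝟙) = 0`.

For Hermitian `A` with `𝓛 A = 0` one has `0 = tr(A 𝓛 A) = tr(A² C) - Σ_k ‖[L_k, A]‖²`, where
`C = Σ_k [L_k, L_k†]` is traceless and `𝓛 𝟙 = 2C`. For `A = a_i` the first term vanishes: either
some `a_tt ≠ 0`, so `𝓛 𝟙 = 0`, or the diagonal of `a` is zero and `a²` is scalar. Hence every `L_k`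
commutes with all `a_i` and `b_i`. As `[a, b]` is nonzero and trace-orthogonal to `𝟙, a, b`, these
four matrices span `M₂(ℂ)`, so the `L_k` commute with every single-site operator and are scalars.
Then `𝓛 = i[·, H]`, so `H` commutes with all `a_i` and `b_i` and is a scalar as well.
-/

open Matrix Complex

noncomputable section

variable {n : ℕ}

open scoped Kronecker ComplexOrder

section TwoByTwo

variable {a b : Matrix (Fin 2) (Fin 2) ℂ}

lemma mul_ne_mul_of_linearIndependent (ha : a.IsHermitian) (hb : b.IsHermitian)
    (hind : LinearIndependent ℂ ![1, a, b]) : a * b ≠ b * a := by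
  intro hab
  rw [Fintype.linearIndependent_iff] at hind
  have not_scalar : ∀ y z : ℂ, (y ≠ 0 ∨ z ≠ 0) → (y • a + z • b) 0 1 = 0 →
      (y • a + z • b) 1 0 = 0 → (y • a + z • b) 0 0 = (y • a + z • b) 1 1 → False := by
    intro y z hyz h01 h10 hd
    have h := hind ![-(y • a + z • b) 0 0, y, z] (by
      ext i j
      fin_cases i <;> fin_cases j <;> simp [Fin.sum_univ_three] at h01 h10 hd ⊢
      exacts [h01, h10, by linear_combination -hd])
    rcases hyz with hy | hz
    · exact hy (h 1)
    · exact hz (h 2)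
  have e00 := congrFun₂ hab 0 0
  have e10 := congrFun₂ hab 1 0
  simp only [mul_apply, Fin.sum_univ_two] at e00 e10
  have ha01 : a 0 1 = star (a 1 0) := (ha.apply 0 1).symm
  have hb01 : b 0 1 = star (b 1 0) := (hb.apply 0 1).symm
  by_cases hlow : a 1 0 = 0 ∧ b 1 0 = 0
  · by_cases hdiag : a 0 0 = a 1 1
    · exact not_scalar 1 0 (by simp) (by simp [ha01, hlow.1]) (by simp [hlow.1]) (by simp [hdiag])
    · exact not_scalar (b 0 0 - b 1 1) (a 1 1 - a 0 0) (Or.inr (sub_ne_zero.2 (Ne.symm hdiag)))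
        (by simp [ha01, hb01, hlow]) (by simp [hlow]) (by simp; ring)
  · refine not_scalar (b 1 0) (-a 1 0) ?_ (by simp; linear_combination e00) (by simp; ring)
      (by simp; linear_combination -e10)
    rw [not_and_or] at hlow
    exact hlow.symm.imp id (neg_ne_zero.2)

lemma linearIndependent_commutator_one (ha : a.IsHermitian) (hb : b.IsHermitian)
    (hind : LinearIndependent ℂ ![1, a, b]) :
    LinearIndependent ℂ ![a * b - b * a, 1, a, b] := by
  set l := a * b - b * a
  have hl : l ≠ 0 := sub_ne_zero.2 (mul_ne_mul_of_linearIndependent ha hb hind)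
  let φ : Matrix (Fin 2) (Fin 2) ℂ →ₗ[ℂ] ℂ := traceLinearMap _ ℂ ℂ ∘ₗ LinearMap.mulRight ℂ l
  have hφ : Set.range ![1, a, b] ⊆ LinearMap.ker φ := by
    rintro _ ⟨i, rfl⟩
    fin_cases i <;> simp only [Fin.isValue, Fin.mk_one, Fin.reduceFinMk, cons_val, SetLike.mem_coe,
      LinearMap.mem_ker]
    all_goals simp only [φ, l, LinearMap.comp_apply, LinearMap.mulRight_apply, traceLinearMap_apply,
      mul_sub, ← mul_assoc, trace_sub, sub_eq_zero, one_mul]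
    exacts [trace_mul_comm a b, (trace_mul_cycle a b a).symm, trace_mul_cycle b a b]
  have hφl : φ l ≠ 0 := by
    have hlH : lᴴ = -l := by
      simp [l, conjTranspose_sub, conjTranspose_mul, ha.eq, hb.eq]
    simpa [φ, hlH] using trace_mul_conjTranspose_self_eq_zero_iff.not.2 hl
  exact linearIndependent_finCons.2 ⟨hind, fun hmem => hφl (Submodule.span_le.2 hφ hmem)⟩

lemma adjoin_pair_eq_top (ha : a.IsHermitian) (hb : b.IsHermitian)
    (hind : LinearIndependent ℂ ![1, a, b]) : Algebra.adjoin ℂ {a, b} = ⊤ := by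
  have hspan := (linearIndependent_commutator_one ha hb hind).span_eq_top_of_card_eq_finrank
    (by simp [Module.finrank_matrix])
  refine eq_top_iff.2 fun c _ => ?_
  have hc : c ∈ Submodule.span ℂ (Set.range ![a * b - b * a, 1, a, b]) := hspan ▸ trivial
  show c ∈ Subalgebra.toSubmodule (Algebra.adjoin ℂ {a, b})
  refine Submodule.span_le.2 ?_ hc
  have ha' : a ∈ Algebra.adjoin ℂ {a, b} := Algebra.subset_adjoin (by simp)
  have hb' : b ∈ Algebra.adjoin ℂ {a, b} := Algebra.subset_adjoin (by simp)
  rintro _ ⟨i, rfl⟩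
  rw [SetLike.mem_coe, Subalgebra.mem_toSubmodule]
  fin_cases i
  exacts [sub_mem (mul_mem ha' hb') (mul_mem hb' ha'), one_mem _, ha', hb']

end TwoByTwo

lemma eq_of_forall_update_eq {ι β γ : Type*} [Fintype ι] [DecidableEq ι] (f : (ι → β) → γ)
    (hf : ∀ u i b, f (Function.update u i b) = f u) (u v : ι → β) : f u = f v := by
  suffices ∀ s : Finset ι, ∀ u, (∀ i ∉ s, u i = v i) → f u = f v from this Finset.univ u (by simp)
  intro s
  induction s using Finset.induction_on with
  | empty => exact fun u h => congrArg f (funext fun i => h i (Finset.notMem_empty i))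
  | insert i s _ ih =>
    intro u h
    rw [← hf u i (v i)]
    refine ih _ fun j hj => ?_
    by_cases hji : j = i
    · simp [hji]
    · simp [hji, h j (by simp [hji, hj])]

section SiteOp

variable {r : ℕ}

def siteOp (i : Fin r) : Matrix (Fin 2) (Fin 2) ℂ →ₐ[ℂ] QOp r :=
  AlgHom.ofLinearMap
    { toFun c := (c ⊗ₖ (1 : Matrix ({j // j ≠ i} → Fin 2) _ ℂ)).submatrix
        (Equiv.piSplitAt i _) (Equiv.piSplitAt i _)
      map_add' c d := by rw [add_kronecker]; rfl
      map_smul' z c := by rw [smul_kronecker]; rfl }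
    (by simp only [LinearMap.coe_mk, AddHom.coe_mk]; rw [one_kronecker_one, submatrix_one_equiv])
    (fun c d => by
      simp only [LinearMap.coe_mk, AddHom.coe_mk]
      rw [submatrix_mul_equiv, ← mul_kronecker_mul, mul_one])

lemma siteOp_apply (i : Fin r) (c : Matrix (Fin 2) (Fin 2) ℂ) (u v : Fin r → Fin 2) :
    siteOp i c u v = if ∀ j ≠ i, u j = v j then c (u i) (v i) else 0 := by
  simp [siteOp, one_apply, funext_iff]

lemma isHermitian_siteOp {c : Matrix (Fin 2) (Fin 2) ℂ} (hc : c.IsHermitian) (i : Fin r) :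
    (siteOp i c).IsHermitian := by
  simpa [IsHermitian, siteOp, conjTranspose_kronecker] using congrArg (siteOp i) hc.eq

lemma siteOp_single_apply (i : Fin r) (s t : Fin 2) (u v : Fin r → Fin 2) :
    siteOp i (single s t 1) u v = if u = Function.update v i s ∧ v i = t then 1 else 0 := by
  simp only [siteOp_apply, single_apply, Function.eq_update_iff]
  split_ifs <;> grind

lemma mul_siteOp_single_apply (X : QOp r) (i : Fin r) (s t : Fin 2) (u v : Fin r → Fin 2) :
    (X * siteOp i (single s t 1)) u v = if v i = t then X u (Function.update v i s) else 0 := by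
  simp [mul_apply, siteOp_single_apply, ite_and]

lemma siteOp_single_mul_apply (X : QOp r) (i : Fin r) (s t : Fin 2) (u v : Fin r → Fin 2) :
    (siteOp i (single s t 1) * X) u v = if u i = s then X (Function.update u i t) v else 0 := by
  have key : ∀ w, (u = Function.update w i s ∧ w i = t) ↔
      (w = Function.update u i t ∧ u i = s) := fun w => by
    simp only [Function.eq_update_iff]
    grind
  simp [mul_apply, siteOp_single_apply, key, ite_and]

lemma exists_eq_smul_one_of_commute_siteOp (X : QOp r)
    (hX : ∀ i c, Commute X (siteOp i c)) : ∃ γ : ℂ, X = γ • 1 := by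
  have R : ∀ i s t u v, (if v i = t then X u (Function.update v i s) else 0)
      = if u i = s then X (Function.update u i t) v else 0 := fun i s t u v => by
    rw [← mul_siteOp_single_apply, ← siteOp_single_mul_apply, (hX i _).eq]
  have hoff : ∀ u v, u ≠ v → X u v = 0 := fun u v huv => by
    obtain ⟨i, hi⟩ := Function.ne_iff.mp huv
    simpa [hi] using R i (v i) (v i) u v
  have hdiag : ∀ u, X u u = X 0 0 := fun u => eq_of_forall_update_eq (fun u => X u u)
    (fun u i t => by simpa using (R i (u i) t u (Function.update u i t)).symm) u 0
  refine ⟨X 0 0, ext fun u v => ?_⟩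
  rcases eq_or_ne u v with rfl | h
  · simp [hdiag]
  · simp [hoff u v h, h]

lemma exists_eq_smul_one_of_commute_siteOp_pair {a b : Matrix (Fin 2) (Fin 2) ℂ}
    (ha : a.IsHermitian) (hb : b.IsHermitian) (hind : LinearIndependent ℂ ![1, a, b])
    {X : QOp r} (hX : ∀ i, Commute X (siteOp i a) ∧ Commute X (siteOp i b)) :
    ∃ γ : ℂ, X = γ • 1 := by
  refine exists_eq_smul_one_of_commute_siteOp X fun i c => ?_
  have hle : Algebra.adjoin ℂ {a, b} ≤ (Subalgebra.centralizer ℂ {X}).comap (siteOp i) := by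
    refine Algebra.adjoin_le ?_
    rintro _ (rfl | rfl) <;>
      simp only [Subalgebra.coe_comap, Set.mem_preimage, Subalgebra.coe_centralizer,
        Set.mem_centralizer_iff, Set.mem_singleton_iff, forall_eq]
    exacts [(hX i).1.eq, (hX i).2.eq]
  have hc := hle (adjoin_pair_eq_top ha hb hind ▸ Algebra.mem_top : c ∈ Algebra.adjoin ℂ {a, b})
  simpa [Subalgebra.mem_centralizer_iff, Commute, SemiconjBy, eq_comm] using hc

end SiteOp

section Lindblad

variable {ι : Type*} [Fintype ι]

lemma trace_mul_dissipator_self {A : Matrix ι ι ℂ} (hA : A.IsHermitian) (L : Matrix ι ι ℂ) :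
    (A * dissipator L A).trace
      = (A * A * (L * Lᴴ - Lᴴ * L)).trace - ((L * A - A * L)ᴴ * (L * A - A * L)).trace := by
  simp only [dissipator, mul_add, mul_sub, sub_mul, conjTranspose_sub, conjTranspose_mul,
    hA.eq, trace_add, trace_sub, ← mul_assoc]
  have h1 : (Lᴴ * A * L * A).trace = (A * L * A * Lᴴ).trace := by
    simp only [mul_assoc]; rw [trace_mul_comm Lᴴ]; simp only [mul_assoc]
  have h2 : (A * Lᴴ * A * L).trace = (A * L * A * Lᴴ).trace := by
    rw [mul_assoc (A * Lᴴ), trace_mul_comm, ← mul_assoc]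
  have h3 : (Lᴴ * A * A * L).trace = (A * A * L * Lᴴ).trace := by
    simp only [mul_assoc]; rw [trace_mul_comm Lᴴ]; simp only [mul_assoc]
  linear_combination -h1 - h2 + h3

lemma dissipator_smul_one [DecidableEq ι] (γ : ℂ) (ρ : Matrix ι ι ℂ) :
    dissipator (γ • (1 : Matrix ι ι ℂ)) ρ = 0 := by
  simp only [dissipator, conjTranspose_smul, conjTranspose_one, Matrix.smul_mul,
    Matrix.mul_smul, one_mul, mul_one, smul_smul, mul_comm (star γ) γ]
  abel

lemma eq_zero_of_sum_trace_conjTranspose_mul_self_eq_zero {m : ℕ} {M : Fin m → Matrix ι ι ℂ}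
    (h : ∑ k, ((M k)ᴴ * M k).trace = 0) (k : Fin m) : M k = 0 := by
  rw [Finset.sum_eq_zero_iff_of_nonneg
    fun k _ => (posSemidef_conjTranspose_mul_self _).trace_nonneg] at h
  exact trace_conjTranspose_mul_self_eq_zero_iff.1 (h k (Finset.mem_univ k))

variable {m : ℕ} (H : Matrix ι ι ℂ) (Ls : Fin m → Matrix ι ι ℂ)

def lindbladian (ρ : Matrix ι ι ℂ) : Matrix ι ι ℂ :=
  Complex.I • (ρ * H - H * ρ) + ∑ k, dissipator (Ls k) ρ

lemma lindbladian_smul (z : ℂ) (ρ : Matrix ι ι ℂ) :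
    lindbladian H Ls (z • ρ) = z • lindbladian H Ls ρ := by
  simp only [lindbladian, dissipator, Matrix.smul_mul, Matrix.mul_smul, smul_add, smul_sub,
    Finset.smul_sum, smul_comm z Complex.I]

lemma lindbladian_one [DecidableEq ι] :
    lindbladian H Ls 1 = (2 : ℂ) • ∑ k, (Ls k * (Ls k)ᴴ - (Ls k)ᴴ * Ls k) := by
  simp only [lindbladian, dissipator, one_mul, mul_one, sub_self, smul_zero, zero_add,
    Finset.smul_sum, two_smul]

variable {H Ls}

lemma trace_mul_lindbladian_self {A : Matrix ι ι ℂ} (hA : A.IsHermitian) :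
    (A * lindbladian H Ls A).trace = (A * A * ∑ k, (Ls k * (Ls k)ᴴ - (Ls k)ᴴ * Ls k)).trace
      - ∑ k, ((Ls k * A - A * Ls k)ᴴ * (Ls k * A - A * Ls k)).trace := by
  have hH : (A * (A * H - H * A)).trace = 0 := by
    rw [mul_sub, trace_sub, ← mul_assoc, ← mul_assoc, trace_mul_cycle A H A, sub_self]
  simp only [lindbladian, mul_add, Matrix.mul_smul, trace_add, trace_smul, hH, smul_zero,
    zero_add, Matrix.mul_sum, trace_sum, trace_mul_dissipator_self hA]
  rw [Finset.sum_sub_distrib]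

lemma commute_of_lindbladian_eq_zero {A : Matrix ι ι ℂ} (hA : A.IsHermitian)
    (h0 : lindbladian H Ls A = 0)
    (htr : (A * A * ∑ k, (Ls k * (Ls k)ᴴ - (Ls k)ᴴ * Ls k)).trace = 0) (k : Fin m) :
    Commute (Ls k) A := by
  have h := trace_mul_lindbladian_self (H := H) (Ls := Ls) hA
  rw [h0, mul_zero, trace_zero, htr, zero_sub, eq_comm, neg_eq_zero] at h
  exact sub_eq_zero.1 (eq_zero_of_sum_trace_conjTranspose_mul_self_eq_zero h k)

lemma lindbladian_eq_of_forall_eq_smul_one [DecidableEq ι] (hLs : ∀ k, ∃ γ : ℂ, Ls k = γ • 1)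
    (ρ : Matrix ι ι ℂ) : lindbladian H Ls ρ = Complex.I • (ρ * H - H * ρ) := by
  rw [lindbladian, add_eq_left]
  refine Finset.sum_eq_zero fun k _ => ?_
  obtain ⟨γ, hγ⟩ := hLs k
  rw [hγ, dissipator_smul_one]

lemma commute_hamiltonian_of_lindbladian_eq_zero [DecidableEq ι]
    (hLs : ∀ k, ∃ γ : ℂ, Ls k = γ • 1) {A : Matrix ι ι ℂ} (h0 : lindbladian H Ls A = 0) :
    Commute H A := by
  rw [lindbladian_eq_of_forall_eq_smul_one hLs, smul_eq_zero, sub_eq_zero] at h0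
  exact (h0.resolve_left I_ne_zero).symm

end Lindblad

lemma commute_siteOp_of_lindbladian {r m : ℕ} {H : QOp r} {Ls : Fin m → QOp r}
    {c : Matrix (Fin 2) (Fin 2) ℂ} (hc : c.IsHermitian)
    (hsite : ∀ i, lindbladian H Ls (siteOp i c) = 0)
    (hscalar : ∀ t, lindbladian H Ls (c t t • 1) = 0) (k : Fin m) (i : Fin r) :
    Commute (Ls k) (siteOp i c) := by
  refine commute_of_lindbladian_eq_zero (isHermitian_siteOp hc i) (hsite i) ?_ k
  by_cases hdiag : c 0 0 = 0 ∧ c 1 1 = 0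
  · have hcc : c * c = (c 0 1 * c 1 0) • 1 := by
      ext p q
      fin_cases p <;> fin_cases q <;> simp [mul_apply, hdiag, mul_comm]
    have htr : (∑ k, (Ls k * (Ls k)ᴴ - (Ls k)ᴴ * Ls k)).trace = 0 := by
      simp [trace_sum, trace_sub, trace_mul_comm (Ls _)]
    rw [← map_mul, hcc, map_smul, map_one, Matrix.smul_mul, one_mul, trace_smul, htr, smul_zero]
  · obtain ⟨t, ht⟩ : ∃ t, c t t ≠ 0 := by
      by_contra! h
      exact hdiag ⟨h 0, h 1⟩
    have h1 := hscalar t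
    rw [lindbladian_smul, smul_eq_zero, or_iff_right ht, lindbladian_one, smul_eq_zero,
      or_iff_right two_ne_zero] at h1
    rw [h1, mul_zero, trace_zero]

section Ring

variable {r : ℕ}

def windowConfig (u : Fin r → Fin 2) (t : Fin 2) : ZMod n → Fin 2 :=
  fun s => if h : s.val < r then u ⟨s.val, h⟩ else t

lemma val_natCast_finVal (hrn : r ≤ n) (i : Fin r) : ((i : ℕ) : ZMod n).val = i :=
  ZMod.val_natCast_of_lt (i.isLt.trans_le hrn)

lemma natCast_finVal_inj (hrn : r ≤ n) {i j : Fin r} :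
    ((i : ℕ) : ZMod n) = ((j : ℕ) : ZMod n) ↔ i = j := by
  refine ⟨fun h => Fin.ext ?_, fun h => h ▸ rfl⟩
  simpa [val_natCast_finVal hrn] using congrArg ZMod.val h

lemma windowConfig_natCast (hrn : r ≤ n) (u : Fin r → Fin 2) (t : Fin 2) (i : Fin r) :
    windowConfig u t ((i : ℕ) : ZMod n) = u i := by
  simp [windowConfig, val_natCast_finVal hrn]

lemma windowConfig_of_le (u : Fin r → Fin 2) (t : Fin 2) {s : ZMod n} (hs : r ≤ s.val) :
    windowConfig u t s = t :=
  dif_neg hs.not_gt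

variable [NeZero n]

lemma embSite_apply (k : ZMod n) (c : Matrix (Fin 2) (Fin 2) ℂ) (x y : ZMod n → Fin 2) :
    embSite k c x y = if ∀ s ≠ k, x s = y s then c (x k) (y k) else 0 := by
  have hcond : ∀ s, (if s = k then (1 : ℂ) else if x s = y s then 1 else 0)
      = if s ≠ k → x s = y s then 1 else 0 := fun s => by
    by_cases hs : s = k <;> simp [hs]
  simp only [embSite, of_apply, hcond, Fintype.prod_boole, ite_mul, one_mul, zero_mul]

lemma exists_eq_natCast_iff (hrn : r ≤ n) (s : ZMod n) :
    (∃ i : Fin r, s = 0 + ((i : ℕ) : ZMod n)) ↔ s.val < r := by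
  refine ⟨?_, fun h => ⟨⟨s.val, h⟩, by simp⟩⟩
  rintro ⟨i, rfl⟩
  simp [val_natCast_finVal hrn]

lemma forall_windowConfig_iff (hrn : r ≤ n) (Q : ZMod n → Fin 2 → Fin 2 → Prop)
    (u u' : Fin r → Fin 2) (t : Fin 2) :
    (∀ s, Q s (windowConfig u t s) (windowConfig u' t s)) ↔
      (∀ i : Fin r, Q i (u i) (u' i)) ∧ ∀ s : ZMod n, r ≤ s.val → Q s t t := by
  refine ⟨fun h => ⟨fun i => ?_, fun s hs => ?_⟩, fun ⟨hin, hout⟩ s => ?_⟩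
  · simpa [windowConfig_natCast hrn] using h i
  · simpa [windowConfig_of_le _ _ hs] using h s
  · rcases lt_or_ge s.val r with hs | hs
    · simpa [windowConfig, hs] using hin ⟨s.val, hs⟩
    · simpa [windowConfig_of_le _ _ hs] using hout s hs

lemma patch_zero_windowConfig (hrn : r ≤ n) (u v : Fin r → Fin 2) (t : Fin 2) :
    patch r (0 : ZMod n) (windowConfig u t) v = windowConfig v t := by
  funext s
  by_cases h : ∃ i : Fin r, s = 0 + ((i : ℕ) : ZMod n)
  · rw [patch, dif_pos h]
    conv_rhs => rw [h.choose_spec, zero_add, windowConfig_natCast hrn]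
  · have hs : r ≤ s.val := not_lt.1 ((exists_eq_natCast_iff hrn s).not.1 h)
    rw [patch, dif_neg h, windowConfig_of_le _ _ hs, windowConfig_of_le _ _ hs]

def windowBlock (t : Fin 2) (M : ROp n) : QOp r :=
  of fun v v' => M (windowConfig v t) (windowConfig v' t)

lemma embMap_zero_apply_windowConfig (hrn : r ≤ n) (𝓛 : QOp r → QOp r) (M : ROp n)
    (u u' : Fin r → Fin 2) (t : Fin 2) :
    embMap r 0 𝓛 M (windowConfig u t) (windowConfig u' t) = 𝓛 (windowBlock t M) u u' := by
  have hprod : (∏ s : ZMod n, if ∃ i : Fin r, s = 0 + ((i : ℕ) : ZMod n) then (1 : ℂ)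
      else if windowConfig u t s = windowConfig u' t s then 1 else 0) = 1 := by
    refine Finset.prod_eq_one fun s _ => ?_
    by_cases h : ∃ i : Fin r, s = 0 + ((i : ℕ) : ZMod n)
    · rw [if_pos h]
    · have hs : r ≤ s.val := not_lt.1 ((exists_eq_natCast_iff hrn s).not.1 h)
      rw [if_neg h, windowConfig_of_le _ _ hs, windowConfig_of_le _ _ hs, if_pos rfl]
  have hwin : ∀ w : Fin r → Fin 2,
      (fun i : Fin r => windowConfig (n := n) w t (0 + ((i : ℕ) : ZMod n))) = w := fun w =>
    funext fun i => by rw [zero_add, windowConfig_natCast hrn]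
  simp only [embMap, of_apply, hprod, one_mul, patch_zero_windowConfig hrn, hwin]
  rfl

lemma map_windowBlock_eq_zero (hrn : r ≤ n) {𝓛 : QOp r → QOp r} {M : ROp n}
    (h : embMap r 0 𝓛 M = 0) (t : Fin 2) : 𝓛 (windowBlock t M) = 0 := by
  ext u u'
  rw [Matrix.zero_apply, ← embMap_zero_apply_windowConfig hrn 𝓛 M u u' t, h, Matrix.zero_apply]

lemma windowBlock_embSite_natCast (hrn : r ≤ n) (i : Fin r) (c : Matrix (Fin 2) (Fin 2) ℂ)
    (t : Fin 2) : windowBlock t (embSite ((i : ℕ) : ZMod n) c) = siteOp i c := by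
  ext v v'
  have hcond := forall_windowConfig_iff hrn (fun s x y => s ≠ (i : ℕ) → x = y) v v' t
  simp only [ne_eq, natCast_finVal_inj hrn, implies_true, and_true] at hcond
  rw [windowBlock, of_apply, embSite_apply, siteOp_apply, windowConfig_natCast hrn,
    windowConfig_natCast hrn]
  exact if_congr hcond rfl rfl

lemma windowBlock_embSite_natCast_self (hrn : r < n) (c : Matrix (Fin 2) (Fin 2) ℂ)
    (t : Fin 2) : windowBlock t (embSite ((r : ℕ) : ZMod n) c) = c t t • (1 : QOp r) := by
  ext v v'
  have hr : r ≤ ((r : ℕ) : ZMod n).val := (ZMod.val_natCast_of_lt hrn).ge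
  have hne : ∀ i : Fin r, ((i : ℕ) : ZMod n) ≠ r := fun i h => by
    have := congrArg ZMod.val h
    rw [val_natCast_finVal hrn.le, ZMod.val_natCast_of_lt hrn] at this
    exact i.isLt.ne this
  have hcond := forall_windowConfig_iff hrn.le (fun s x y => s ≠ (r : ℕ) → x = y) v v' t
  simp only [ne_eq, hne, not_false_eq_true, forall_const, implies_true, and_true] at hcond
  rw [windowBlock, of_apply, embSite_apply, windowConfig_of_le _ _ hr, windowConfig_of_le _ _ hr,
    if_congr (hcond.trans funext_iff.symm) rfl rfl, Matrix.smul_apply, one_apply, smul_eq_mul,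
    mul_ite, mul_one, mul_zero]

lemma map_siteOp_eq_zero_of_embMap (hrn : r ≤ n) {𝓛 : QOp r → QOp r}
    {c : Matrix (Fin 2) (Fin 2) ℂ} (h : ∀ k : ZMod n, embMap r 0 𝓛 (embSite k c) = 0)
    (i : Fin r) : 𝓛 (siteOp i c) = 0 := by
  simpa [windowBlock_embSite_natCast hrn] using map_windowBlock_eq_zero hrn (h i) 0

lemma map_smul_one_eq_zero_of_embMap (hrn : r < n) {𝓛 : QOp r → QOp r}
    {c : Matrix (Fin 2) (Fin 2) ℂ} (h : ∀ k : ZMod n, embMap r 0 𝓛 (embSite k c) = 0)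
    (t : Fin 2) : 𝓛 (c t t • 1) = 0 := by
  simpa [windowBlock_embSite_natCast_self hrn] using map_windowBlock_eq_zero hrn.le (h r) t

end Ring

theorem stmt5_general (r : ℕ) (n : ℕ) [NeZero n] (hn : r + 2 ≤ n)
    (a b : Matrix (Fin 2) (Fin 2) ℂ) (ha : a.IsHermitian) (hb : b.IsHermitian)
    (hind : LinearIndependent ℂ ![(1 : Matrix (Fin 2) (Fin 2) ℂ), a, b])
    (𝓛 : QOp r → QOp r) (hL : IsLindblad 𝓛)
    (hca : ∀ j k : ZMod n, embMap r j 𝓛 (embSite k a) = 0)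
    (hcb : ∀ j k : ZMod n, embMap r j 𝓛 (embSite k b) = 0) :
    ∀ ρ, 𝓛 ρ = 0 := by
  obtain ⟨H, -, m, Ls, h𝓛⟩ := hL
  obtain rfl : 𝓛 = lindbladian H Ls := funext h𝓛
  have hrn : r < n := by omega
  have hsite : ∀ c, (∀ j k : ZMod n, embMap r j (lindbladian H Ls) (embSite k c) = 0) →
      ∀ i, lindbladian H Ls (siteOp i c) = 0 :=
    fun c hc => map_siteOp_eq_zero_of_embMap hrn.le (hc 0)
  have hcomm : ∀ c, c.IsHermitian →
      (∀ j k : ZMod n, embMap r j (lindbladian H Ls) (embSite k c) = 0) →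
      ∀ k i, Commute (Ls k) (siteOp i c) := fun c hc hcons =>
    commute_siteOp_of_lindbladian hc (hsite c hcons) (map_smul_one_eq_zero_of_embMap hrn (hcons 0))
  have hLs : ∀ k, ∃ γ : ℂ, Ls k = γ • 1 := fun k =>
    exists_eq_smul_one_of_commute_siteOp_pair ha hb hind fun i =>
      ⟨hcomm a ha hca k i, hcomm b hb hcb k i⟩
  obtain ⟨γ, rfl⟩ := exists_eq_smul_one_of_commute_siteOp_pair ha hb hind fun i =>
    ⟨commute_hamiltonian_of_lindbladian_eq_zero hLs (hsite a hca i),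
      commute_hamiltonian_of_lindbladian_eq_zero hLs (hsite b hcb i)⟩
  intro ρ
  rw [lindbladian_eq_of_forall_eq_smul_one hLs, Matrix.mul_smul, Matrix.smul_mul, mul_one,
    one_mul, sub_self, smul_zero]

/-- it is impossible to locally conserve two (together with 𝟙) linearly
independent Hermitian single-site operators by a nontrivial translationally invariant
`r`-local Lindblad equation. -/
theorem stmt5 (r : ℕ) (hr : 1 ≤ r) (n : ℕ) [NeZero n] (hn : r + 2 ≤ n)
    (a b : Matrix (Fin 2) (Fin 2) ℂ) (ha : a.IsHermitian) (hb : b.IsHermitian)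
    (hind : LinearIndependent ℂ ![(1 : Matrix (Fin 2) (Fin 2) ℂ), a, b])
    (𝓛 : QOp r → QOp r) (hL : IsLindblad 𝓛)
    (hca : ∀ j k : ZMod n, embMap r j 𝓛 (embSite k a) = 0)
    (hcb : ∀ j k : ZMod n, embMap r j 𝓛 (embSite k b) = 0) :
    ∀ ρ, 𝓛 ρ = 0 :=
  stmt5_general r n hn a b ha hb hind 𝓛 hL hca hcb
end
end

section
/- Let d₁, d₂ ≥ 1 and let ℒ be a Lindblad generator on the bipartite matrix algebra M_{d₁·d₂}(ℂ), realized as matrices indexed by Fin d₁ × Fin d₂. Then the reduced map σ ↦ Tr₁(ℒ(𝟙_{d₁} ⊗ σ)) on M_{d₂}(ℂ) is again a Lindblad generator: there exist a Hermitian H_red ∈ M_{d₂}(ℂ) and a finite family (K_m) of matrices in M_{d₂}(ℂ) such that Tr₁(ℒ(𝟙_{d₁} ⊗ σ)) = i(σH_red − H_redσ) + Σ_m ([K_mσ, K_m†] + [K_m, σK_m†]) for all σ ∈ M_{d₂}(ℂ). -/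
open Matrix Complex

noncomputable section

variable {n : ℕ}

/-- Partial trace over the first tensor factor. -/
def ptrace1 {d₁ d₂ : ℕ} (M : Matrix (Fin d₁ × Fin d₂) (Fin d₁ × Fin d₂) ℂ) :
    Matrix (Fin d₂) (Fin d₂) ℂ :=
  Matrix.of fun j k => ∑ i : Fin d₁, M (i, j) (i, k)

section Aux

open Kronecker

variable {d₁ d₂ : ℕ}

/-- The `(a, b)` block of a bipartite matrix. -/
def blk (M : Matrix (Fin d₁ × Fin d₂) (Fin d₁ × Fin d₂) ℂ) (a b : Fin d₁) :
    Matrix (Fin d₂) (Fin d₂) ℂ :=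
  Matrix.of fun j k => M (a, j) (b, k)

lemma ptrace1_add (A B : Matrix (Fin d₁ × Fin d₂) (Fin d₁ × Fin d₂) ℂ) :
    ptrace1 (A + B) = ptrace1 A + ptrace1 B := by
  ext j k; simp [ptrace1, Finset.sum_add_distrib]

lemma ptrace1_sub (A B : Matrix (Fin d₁ × Fin d₂) (Fin d₁ × Fin d₂) ℂ) :
    ptrace1 (A - B) = ptrace1 A - ptrace1 B := by
  ext j k; simp [ptrace1, Finset.sum_sub_distrib]

lemma ptrace1_smul (c : ℂ) (A : Matrix (Fin d₁ × Fin d₂) (Fin d₁ × Fin d₂) ℂ) :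
    ptrace1 (c • A) = c • ptrace1 A := by
  ext j k; simp [ptrace1, Finset.mul_sum]

lemma ptrace1_sum {ι : Type*} (s : Finset ι)
    (f : ι → Matrix (Fin d₁ × Fin d₂) (Fin d₁ × Fin d₂) ℂ) :
    ptrace1 (∑ i ∈ s, f i) = ∑ i ∈ s, ptrace1 (f i) := by
  ext j k
  simp only [ptrace1, Matrix.of_apply, Matrix.sum_apply]
  rw [Finset.sum_comm]

lemma kron_mul_entry (σ : Matrix (Fin d₂) (Fin d₂) ℂ)
    (M : Matrix (Fin d₁ × Fin d₂) (Fin d₁ × Fin d₂) ℂ) (a b : Fin d₁) (j l : Fin d₂) :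
    (M * ((1 : Matrix (Fin d₁) (Fin d₁) ℂ) ⊗ₖ σ)) (a, j) (b, l)
      = (blk M a b * σ) j l := by
  rw [Matrix.mul_apply, Fintype.sum_prod_type]
  have h : ∀ c, (∑ p, M (a, j) (c, p) * ((1 : Matrix (Fin d₁) (Fin d₁) ℂ) ⊗ₖ σ) (c, p) (b, l))
      = (1 : Matrix (Fin d₁) (Fin d₁) ℂ) c b * ∑ p, M (a, j) (c, p) * σ p l := by
    intro c
    rw [Finset.mul_sum]
    exact Finset.sum_congr rfl fun p _ => by
      simp only [Matrix.kroneckerMap_apply]; ring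
  simp only [h, Matrix.one_apply, ite_mul, one_mul, zero_mul, Finset.sum_ite_eq,
    Finset.mem_univ, if_true]
  simp [blk, Matrix.mul_apply]

lemma ptrace1_mul_kron (σ : Matrix (Fin d₂) (Fin d₂) ℂ)
    (M : Matrix (Fin d₁ × Fin d₂) (Fin d₁ × Fin d₂) ℂ) :
    ptrace1 (M * ((1 : Matrix (Fin d₁) (Fin d₁) ℂ) ⊗ₖ σ)) = ptrace1 M * σ := by
  ext j k
  simp only [ptrace1, Matrix.of_apply, kron_mul_entry]
  simp only [Matrix.mul_apply, blk, Matrix.of_apply, Finset.sum_mul]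
  rw [Finset.sum_comm]

lemma ptrace1_kron_mul (σ : Matrix (Fin d₂) (Fin d₂) ℂ)
    (M : Matrix (Fin d₁ × Fin d₂) (Fin d₁ × Fin d₂) ℂ) :
    ptrace1 (((1 : Matrix (Fin d₁) (Fin d₁) ℂ) ⊗ₖ σ) * M) = σ * ptrace1 M := by
  ext j k
  simp only [ptrace1, Matrix.of_apply]
  have : ∀ a : Fin d₁, (((1 : Matrix (Fin d₁) (Fin d₁) ℂ) ⊗ₖ σ) * M) (a, j) (a, k)
      = ∑ l, σ j l * M (a, l) (a, k) := by
    intro a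
    simp [Matrix.mul_apply, Fintype.sum_prod_type, Matrix.one_apply,
      ite_mul, Finset.sum_ite_eq]
  simp only [this, Matrix.mul_apply, ptrace1, Matrix.of_apply, Finset.mul_sum]
  rw [Finset.sum_comm]

lemma ptrace1_conj (L : Matrix (Fin d₁ × Fin d₂) (Fin d₁ × Fin d₂) ℂ)
    (σ : Matrix (Fin d₂) (Fin d₂) ℂ) :
    ptrace1 (L * ((1 : Matrix (Fin d₁) (Fin d₁) ℂ) ⊗ₖ σ) * Lᴴ)
      = ∑ a : Fin d₁, ∑ b : Fin d₁, blk L a b * σ * (blk L a b)ᴴ := by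
  ext j k
  simp only [ptrace1, Matrix.of_apply, Matrix.sum_apply]
  have : ∀ a : Fin d₁, (L * ((1 : Matrix (Fin d₁) (Fin d₁) ℂ) ⊗ₖ σ) * Lᴴ) (a, j) (a, k)
      = ∑ b : Fin d₁, (blk L a b * σ * (blk L a b)ᴴ) j k := by
    intro a
    rw [Matrix.mul_apply, Fintype.sum_prod_type]
    congr 1; ext b
    simp only [kron_mul_entry, Matrix.conjTranspose_apply]
    simp [Matrix.mul_apply, blk, Finset.sum_mul]
  simp [this]

lemma ptrace1_dagmul (L : Matrix (Fin d₁ × Fin d₂) (Fin d₁ × Fin d₂) ℂ) :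
    ptrace1 (Lᴴ * L) = ∑ a : Fin d₁, ∑ b : Fin d₁, (blk L a b)ᴴ * blk L a b := by
  ext j k
  simp only [ptrace1, Matrix.of_apply, Matrix.sum_apply, Matrix.mul_apply,
    Matrix.conjTranspose_apply, blk, Fintype.sum_prod_type]
  rw [Finset.sum_comm]

lemma ptrace1_dissipator (L : Matrix (Fin d₁ × Fin d₂) (Fin d₁ × Fin d₂) ℂ)
    (σ : Matrix (Fin d₂) (Fin d₂) ℂ) :
    ptrace1 (dissipator L ((1 : Matrix (Fin d₁) (Fin d₁) ℂ) ⊗ₖ σ))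
      = ∑ a : Fin d₁, ∑ b : Fin d₁, dissipator (blk L a b) σ := by
  unfold dissipator
  rw [ptrace1_add, ptrace1_sub, ptrace1_sub, ← mul_assoc L, ptrace1_conj,
    show Lᴴ * (L * ((1 : Matrix (Fin d₁) (Fin d₁) ℂ) ⊗ₖ σ))
      = (Lᴴ * L) * ((1 : Matrix (Fin d₁) (Fin d₁) ℂ) ⊗ₖ σ) from (mul_assoc _ _ _).symm,
    ptrace1_mul_kron,
    show ((1 : Matrix (Fin d₁) (Fin d₁) ℂ) ⊗ₖ σ) * Lᴴ * L
      = ((1 : Matrix (Fin d₁) (Fin d₁) ℂ) ⊗ₖ σ) * (Lᴴ * L) from mul_assoc _ _ _,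
    ptrace1_kron_mul, ptrace1_dagmul]
  simp only [Finset.sum_add_distrib, Finset.sum_sub_distrib, Finset.sum_mul,
    Finset.mul_sum, mul_assoc]

lemma ptrace1_hermitian (H : Matrix (Fin d₁ × Fin d₂) (Fin d₁ × Fin d₂) ℂ)
    (hH : H.IsHermitian) : (ptrace1 H).IsHermitian := by
  ext j k
  simp only [Matrix.conjTranspose_apply, ptrace1, Matrix.of_apply, star_sum]
  exact Finset.sum_congr rfl fun a _ => hH.apply _ _

end Aux

open Kronecker in
/-- the reduced map `σ ↦ Tr₁(ℒ(𝟙 ⊗ σ))` of a Lindblad generator on a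
bipartite system is again a Lindblad generator. -/
theorem stmt10 (d₁ d₂ : ℕ) (h₁ : 1 ≤ d₁) (h₂ : 1 ≤ d₂)
    (𝓛 : Matrix (Fin d₁ × Fin d₂) (Fin d₁ × Fin d₂) ℂ →
         Matrix (Fin d₁ × Fin d₂) (Fin d₁ × Fin d₂) ℂ)
    (hL : IsLindblad 𝓛) :
    ∃ Hred : Matrix (Fin d₂) (Fin d₂) ℂ, Hred.IsHermitian ∧
      ∃ (m : ℕ) (Ks : Fin m → Matrix (Fin d₂) (Fin d₂) ℂ),
        ∀ σ : Matrix (Fin d₂) (Fin d₂) ℂ,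
          ptrace1 (𝓛 ((1 : Matrix (Fin d₁) (Fin d₁) ℂ) ⊗ₖ σ)) =
            Complex.I • (σ * Hred - Hred * σ) + ∑ k, dissipator (Ks k) σ := by
  obtain ⟨H, hH, m, Ls, hLs⟩ := hL
  let e : Fin m × (Fin d₁ × Fin d₁) ≃ Fin (m * (d₁ * d₁)) :=
    (Equiv.prodCongr (Equiv.refl (Fin m)) finProdFinEquiv).trans finProdFinEquiv
  refine ⟨ptrace1 H, ptrace1_hermitian H hH, m * (d₁ * d₁),
    fun p => blk (Ls (e.symm p).1) (e.symm p).2.1 (e.symm p).2.2, fun σ => ?_⟩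
  rw [hLs, ptrace1_add, ptrace1_smul, ptrace1_sub, ptrace1_mul_kron, ptrace1_kron_mul,
    ptrace1_sum]
  congr 1
  have := Equiv.sum_comp e.symm
    (fun q : Fin m × (Fin d₁ × Fin d₁) => dissipator (blk (Ls q.1) q.2.1 q.2.2) σ)
  rw [this, Fintype.sum_prod_type]
  exact Finset.sum_congr rfl fun k _ => by
    rw [ptrace1_dissipator, Fintype.sum_prod_type]
end
end

section
/- Let L = σx⊗σx + σy⊗σy + σz⊗σz ∈ M₂(ℂ)⊗M₂(ℂ) and let D(ρ) = [Lρ, L] + [L, ρL] be the corresponding two-qubit dissipator. Then: (i) the kernel of D equals the complex linear span of the ten swap-symmetric operators {σx⊗σx, σy⊗σy, σz⊗σz, σx⊗σy + σy⊗σx, σx⊗σz + σz⊗σx, σy⊗σz + σz⊗σy, σx⊗𝟙 + 𝟙⊗σx, σy⊗𝟙 + 𝟙⊗σy, σz⊗𝟙 + 𝟙⊗σz, 𝟙⊗𝟙}; (ii) for each α ∈ {x, y, z}, D(σ^α⊗𝟙) = −8(σ^α⊗𝟙 − 𝟙⊗σ^α). -/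
open Matrix Complex

noncomputable section

variable {n : ℕ}

section Stmt13Aux
open Kronecker

variable (L : Matrix (Fin 2 × Fin 2) (Fin 2 × Fin 2) ℂ)
  (hLdef : L = σx ⊗ₖ σx + σy ⊗ₖ σy + σz ⊗ₖ σz)
include hLdef

lemma stmt13_L_mul (M : Matrix (Fin 2 × Fin 2) (Fin 2 × Fin 2) ℂ) (x y : Fin 2 × Fin 2) :
    (L * M) x y = 2 * M (x.2, x.1) y - M x y := by
  subst hLdef
  rw [mul_apply, Fintype.sum_prod_type]
  obtain ⟨a, b⟩ := x
  fin_cases a <;> fin_cases b <;>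
    simp [Fin.sum_univ_two, σx, σy, σz, kroneckerMap_apply] <;> ring

lemma stmt13_mul_L (M : Matrix (Fin 2 × Fin 2) (Fin 2 × Fin 2) ℂ) (x y : Fin 2 × Fin 2) :
    (M * L) x y = 2 * M x (y.2, y.1) - M x y := by
  subst hLdef
  rw [mul_apply, Fintype.sum_prod_type]
  obtain ⟨a, b⟩ := y
  fin_cases a <;> fin_cases b <;>
    simp [Fin.sum_univ_two, σx, σy, σz, kroneckerMap_apply] <;> ring

lemma stmt13_LH : Lᴴ = L := by
  subst hLdef
  ext ⟨a, b⟩ ⟨c, d⟩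
  fin_cases a <;> fin_cases b <;> fin_cases c <;> fin_cases d <;>
    simp [conjTranspose_apply, σx, σy, σz, kroneckerMap_apply]

lemma stmt13_diss_entry (ρ : Matrix (Fin 2 × Fin 2) (Fin 2 × Fin 2) ℂ) (x y : Fin 2 × Fin 2) :
    dissipator L ρ x y = 8 * ρ (x.2, x.1) (y.2, y.1) - 8 * ρ x y := by
  simp only [dissipator, stmt13_LH L hLdef, Matrix.add_apply, Matrix.sub_apply,
    stmt13_L_mul L hLdef, stmt13_mul_L L hLdef, Prod.mk.eta]
  ring

end Stmt13Aux

/-- The swap-symmetric two-qubit operators, as a submodule. -/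
def stmt13_symmSub : Submodule ℂ (Matrix (Fin 2 × Fin 2) (Fin 2 × Fin 2) ℂ) where
  carrier := {ρ | ∀ x y : Fin 2 × Fin 2, ρ (x.2, x.1) (y.2, y.1) = ρ x y}
  add_mem' h1 h2 x y := by simp only [Matrix.add_apply, h1 x y, h2 x y]
  zero_mem' x y := rfl
  smul_mem' c ρ h x y := by simp only [Matrix.smul_apply, h x y]

open Kronecker in
lemma stmt13_symm_AA (A : Matrix (Fin 2) (Fin 2) ℂ) : A ⊗ₖ A ∈ stmt13_symmSub := by
  intro x y
  simp only [kroneckerMap_apply]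
  ring

open Kronecker in
lemma stmt13_symm_pair (A B : Matrix (Fin 2) (Fin 2) ℂ) :
    A ⊗ₖ B + B ⊗ₖ A ∈ stmt13_symmSub := by
  intro x y
  simp only [Matrix.add_apply, kroneckerMap_apply]
  ring

open Kronecker in
lemma stmt13_decomp (ρ : Matrix (Fin 2 × Fin 2) (Fin 2 × Fin 2) ℂ)
    (h : ∀ x y : Fin 2 × Fin 2, ρ (x.2, x.1) (y.2, y.1) = ρ x y) :
    ρ = (ρ (0,1) (1,0)/2 + (ρ (0,0) (1,1) + ρ (1,1) (0,0))/4) • (σx ⊗ₖ σx)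
      + (ρ (0,1) (1,0)/2 - (ρ (0,0) (1,1) + ρ (1,1) (0,0))/4) • (σy ⊗ₖ σy)
      + ((ρ (0,0) (0,0) + ρ (1,1) (1,1))/4 - ρ (0,1) (0,1)/2) • (σz ⊗ₖ σz)
      + (Complex.I * (ρ (0,0) (1,1) - ρ (1,1) (0,0))/4) • (σx ⊗ₖ σy + σy ⊗ₖ σx)
      + ((ρ (0,0) (0,1) + ρ (0,1) (0,0) - ρ (0,1) (1,1) - ρ (1,1) (0,1))/4) • (σx ⊗ₖ σz + σz ⊗ₖ σx)
      + (-Complex.I * (ρ (0,1) (0,0) - ρ (0,0) (0,1) + ρ (0,1) (1,1) - ρ (1,1) (0,1))/4) • (σy ⊗ₖ σz + σz ⊗ₖ σy)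
      + ((ρ (0,0) (0,1) + ρ (0,1) (0,0) + ρ (0,1) (1,1) + ρ (1,1) (0,1))/4) • (σx ⊗ₖ (1 : Matrix (Fin 2) (Fin 2) ℂ) + (1 : Matrix (Fin 2) (Fin 2) ℂ) ⊗ₖ σx)
      + (-Complex.I * (ρ (0,1) (0,0) - ρ (0,0) (0,1) + ρ (1,1) (0,1) - ρ (0,1) (1,1))/4) • (σy ⊗ₖ (1 : Matrix (Fin 2) (Fin 2) ℂ) + (1 : Matrix (Fin 2) (Fin 2) ℂ) ⊗ₖ σy)
      + ((ρ (0,0) (0,0) - ρ (1,1) (1,1))/4) • (σz ⊗ₖ (1 : Matrix (Fin 2) (Fin 2) ℂ) + (1 : Matrix (Fin 2) (Fin 2) ℂ) ⊗ₖ σz)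
      + ((ρ (0,0) (0,0) + ρ (1,1) (1,1))/4 + ρ (0,1) (0,1)/2) • ((1 : Matrix (Fin 2) (Fin 2) ℂ) ⊗ₖ (1 : Matrix (Fin 2) (Fin 2) ℂ)) := by
  have hb : ρ (1,0) (1,0) = ρ (0,1) (0,1) := h (0,1) (0,1)
  have he : ρ (1,0) (0,1) = ρ (0,1) (1,0) := h (0,1) (1,0)
  have hp : ρ (0,0) (1,0) = ρ (0,0) (0,1) := h (0,0) (0,1)
  have hq : ρ (1,0) (0,0) = ρ (0,1) (0,0) := h (0,1) (0,0)
  have hr : ρ (1,0) (1,1) = ρ (0,1) (1,1) := h (0,1) (1,1)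
  have hs : ρ (1,1) (1,0) = ρ (1,1) (0,1) := h (1,1) (0,1)
  ext ⟨i, j⟩ ⟨k, l⟩
  fin_cases i <;> fin_cases j <;> fin_cases k <;> fin_cases l <;>
    simp only [Matrix.add_apply, Matrix.smul_apply, kroneckerMap_apply, σx, σy, σz,
      Matrix.one_apply, hb, he, hp, hq, hr, hs, Matrix.cons_val', Matrix.cons_val_zero,
      Matrix.cons_val_one, Matrix.head_cons, Matrix.head_fin_const, Matrix.empty_val',
      Matrix.cons_val_fin_one, smul_eq_mul] <;>
    (try norm_num) <;> (try ring_nf) <;> (try simp only [Complex.I_sq]) <;> (try ring_nf) <;>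
    (try simp only [hb, he, hp, hq, hr, hs]) <;> (try ring_nf) <;>
    simp_all only [Prod.mk_zero_zero, Prod.mk_one_one]

open Kronecker in
/-- kernel of the two-qubit Heisenberg dissipator is the span of the ten
swap-symmetric operators, and `D(σ^α⊗𝟙) = −8(σ^α⊗𝟙 − 𝟙⊗σ^α)`. -/
theorem stmt13 (L : Matrix (Fin 2 × Fin 2) (Fin 2 × Fin 2) ℂ)
    (hLdef : L = σx ⊗ₖ σx + σy ⊗ₖ σy + σz ⊗ₖ σz) :
    (∀ ρ : Matrix (Fin 2 × Fin 2) (Fin 2 × Fin 2) ℂ,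
      dissipator L ρ = 0 ↔ ρ ∈ Submodule.span ℂ
        ({σx ⊗ₖ σx, σy ⊗ₖ σy, σz ⊗ₖ σz,
          σx ⊗ₖ σy + σy ⊗ₖ σx, σx ⊗ₖ σz + σz ⊗ₖ σx, σy ⊗ₖ σz + σz ⊗ₖ σy,
          σx ⊗ₖ (1 : Matrix (Fin 2) (Fin 2) ℂ) + (1 : Matrix (Fin 2) (Fin 2) ℂ) ⊗ₖ σx,
          σy ⊗ₖ (1 : Matrix (Fin 2) (Fin 2) ℂ) + (1 : Matrix (Fin 2) (Fin 2) ℂ) ⊗ₖ σy,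
          σz ⊗ₖ (1 : Matrix (Fin 2) (Fin 2) ℂ) + (1 : Matrix (Fin 2) (Fin 2) ℂ) ⊗ₖ σz,
          (1 : Matrix (Fin 2) (Fin 2) ℂ) ⊗ₖ (1 : Matrix (Fin 2) (Fin 2) ℂ)} :
          Set (Matrix (Fin 2 × Fin 2) (Fin 2 × Fin 2) ℂ))) ∧
    (∀ α ∈ ({σx, σy, σz} : Set (Matrix (Fin 2) (Fin 2) ℂ)),
      dissipator L (α ⊗ₖ (1 : Matrix (Fin 2) (Fin 2) ℂ)) =
        (-8 : ℂ) • (α ⊗ₖ (1 : Matrix (Fin 2) (Fin 2) ℂ)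
          - (1 : Matrix (Fin 2) (Fin 2) ℂ) ⊗ₖ α)) := by
  constructor
  · intro ρ
    constructor
    · intro h0
      have hsym : ∀ x y : Fin 2 × Fin 2, ρ (x.2, x.1) (y.2, y.1) = ρ x y := by
        intro x y
        have h1 : dissipator L ρ x y = 0 := by rw [h0]; rfl
        rw [stmt13_diss_entry L hLdef ρ x y] at h1
        linear_combination h1 / 8
      rw [stmt13_decomp ρ hsym]
      have sub := @Submodule.subset_span ℂ _ _ _ _
        ({σx ⊗ₖ σx, σy ⊗ₖ σy, σz ⊗ₖ σz,
          σx ⊗ₖ σy + σy ⊗ₖ σx, σx ⊗ₖ σz + σz ⊗ₖ σx, σy ⊗ₖ σz + σz ⊗ₖ σy,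
          σx ⊗ₖ (1 : Matrix (Fin 2) (Fin 2) ℂ) + (1 : Matrix (Fin 2) (Fin 2) ℂ) ⊗ₖ σx,
          σy ⊗ₖ (1 : Matrix (Fin 2) (Fin 2) ℂ) + (1 : Matrix (Fin 2) (Fin 2) ℂ) ⊗ₖ σy,
          σz ⊗ₖ (1 : Matrix (Fin 2) (Fin 2) ℂ) + (1 : Matrix (Fin 2) (Fin 2) ℂ) ⊗ₖ σz,
          (1 : Matrix (Fin 2) (Fin 2) ℂ) ⊗ₖ (1 : Matrix (Fin 2) (Fin 2) ℂ)} :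
          Set (Matrix (Fin 2 × Fin 2) (Fin 2 × Fin 2) ℂ))
      refine add_mem (add_mem (add_mem (add_mem (add_mem (add_mem (add_mem (add_mem (add_mem
        (Submodule.smul_mem _ _ (sub ?_)) (Submodule.smul_mem _ _ (sub ?_)))
        (Submodule.smul_mem _ _ (sub ?_))) (Submodule.smul_mem _ _ (sub ?_)))
        (Submodule.smul_mem _ _ (sub ?_))) (Submodule.smul_mem _ _ (sub ?_)))
        (Submodule.smul_mem _ _ (sub ?_))) (Submodule.smul_mem _ _ (sub ?_)))
        (Submodule.smul_mem _ _ (sub ?_))) (Submodule.smul_mem _ _ (sub ?_)) <;>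
        simp only [Set.mem_insert_iff, Set.mem_singleton_iff] <;> tauto
    · intro hmem
      have hρ : ρ ∈ stmt13_symmSub := by
        refine Submodule.span_le.mpr ?_ hmem
        rintro g hg
        simp only [Set.mem_insert_iff, Set.mem_singleton_iff] at hg
        rcases hg with rfl|rfl|rfl|rfl|rfl|rfl|rfl|rfl|rfl|rfl
        exacts [stmt13_symm_AA σx, stmt13_symm_AA σy, stmt13_symm_AA σz,
          stmt13_symm_pair σx σy, stmt13_symm_pair σx σz, stmt13_symm_pair σy σz,
          stmt13_symm_pair σx 1, stmt13_symm_pair σy 1, stmt13_symm_pair σz 1,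
          stmt13_symm_AA 1]
      have h2 : ∀ x y : Fin 2 × Fin 2, ρ (x.2, x.1) (y.2, y.1) = ρ x y := hρ
      ext x y
      rw [stmt13_diss_entry L hLdef ρ x y, h2 x y]
      simp
  · rintro α -
    ext x y
    rw [stmt13_diss_entry L hLdef _ x y]
    simp only [Matrix.smul_apply, Matrix.sub_apply, kroneckerMap_apply, Matrix.one_apply,
      smul_eq_mul]
    ring
end
end

section
/- Let L = σx⊗σx ∈ M₂(ℂ)⊗M₂(ℂ) and let D(ρ) = [Lρ, L] + [L, ρL] be the corresponding two-qubit dissipator. Then the kernel of D is exactly the complex linear span of the eight operators {σx⊗σx, σx⊗𝟙, 𝟙⊗σx, σy⊗σy, σz⊗σz, σy⊗σz, σz⊗σy, 𝟙⊗𝟙}. -/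
open Matrix Complex

noncomputable section

variable {n : ℕ}

/-!
`L = σx ⊗ σx` is a Hermitian involution, so `D(ρ) = 2 (LρL - ρ)` and the kernel of `D` is the
fixed space of conjugation by `L`. Conjugation by `σx` fixes `1`, `σx` and negates `σy`, `σz`,
so conjugation by `L` multiplies each of the sixteen products `P ⊗ Q` of Pauli matrices by `±1`;
the eight with sign `+1` are the listed operators. These are fixed, and conversely a fixed `ρ`
equals its symmetrization `(ρ + LρL) / 2`, which lies in their span because the Pauli products
span all two-qubit operators.
-/

open Kronecker Submodule

section Dissipator

variable {I : Type*} [Fintype I] [DecidableEq I]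

theorem dissipator_eq_of_isHermitian_of_mul_self_eq_one {L : Matrix I I ℂ} (hL : L.IsHermitian)
    (hLL : L * L = 1) (ρ : Matrix I I ℂ) : dissipator L ρ = (2 : ℂ) • (L * ρ * L - ρ) := by
  rw [dissipator, hL.eq, ← mul_assoc L L ρ, mul_assoc ρ L L, hLL, one_mul, mul_one,
    ← mul_assoc, two_smul]

theorem dissipator_eq_zero_iff_of_isHermitian_of_mul_self_eq_one {L : Matrix I I ℂ}
    (hL : L.IsHermitian) (hLL : L * L = 1) (ρ : Matrix I I ℂ) :
    dissipator L ρ = 0 ↔ L * ρ * L = ρ := by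
  rw [dissipator_eq_of_isHermitian_of_mul_self_eq_one hL hLL, smul_eq_zero, sub_eq_zero,
    or_iff_right two_ne_zero]

end Dissipator

namespace Matrix

variable {R l m n p : Type*}

theorem neg_kronecker [Mul R] [HasDistribNeg R] (A : Matrix l m R) (B : Matrix n p R) :
    (-A) ⊗ₖ B = -(A ⊗ₖ B) := by
  ext; simp [neg_mul]

theorem kronecker_neg [Mul R] [HasDistribNeg R] (A : Matrix l m R) (B : Matrix n p R) :
    A ⊗ₖ (-B) = -(A ⊗ₖ B) := by
  ext; simp [mul_neg]

theorem kronecker_mul_kronecker_mul_kronecker [CommSemiring R] [Fintype l] [Fintype n]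
    (A C : Matrix l l R) (B D : Matrix n n R) :
    A ⊗ₖ B * (C ⊗ₖ D) * (A ⊗ₖ B) = (A * C * A) ⊗ₖ (B * D * B) := by
  rw [← mul_kronecker_mul, ← mul_kronecker_mul]

theorem span_image2_kronecker_eq_top [CommSemiring R] [Fintype l] [Fintype m] [Fintype n]
    [Fintype p] [DecidableEq l] [DecidableEq m] [DecidableEq n] [DecidableEq p]
    {s : Set (Matrix l m R)} {t : Set (Matrix n p R)} (hs : span R s = ⊤)
    (ht : span R t = ⊤) : span R (Set.image2 (· ⊗ₖ ·) s t) = ⊤ := by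
  change span R (Set.image2 (fun A B => kroneckerBilinear (R := R) (α := R) A B) s t) = ⊤
  rw [← map₂_span_span, hs, ht, eq_top_iff]
  rintro M -
  rw [matrix_eq_sum_single M]
  refine sum_mem fun ik _ => sum_mem fun jl _ => ?_
  rw [← mul_one (M ik jl), ← single_kronecker_single]
  exact apply_mem_map₂ _ trivial trivial

theorem IsHermitian.kronecker [CommSemiring R] [StarRing R] {A : Matrix l l R} {B : Matrix n n R}
    (hA : A.IsHermitian) (hB : B.IsHermitian) : (A ⊗ₖ B).IsHermitian := by
  rw [IsHermitian, conjTranspose_kronecker, hA.eq, hB.eq]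

end Matrix

theorem σx_mul_σx : σx * σx = 1 := by
  ext i j; fin_cases i <;> fin_cases j <;> simp [σx, mul_apply]

theorem σx_mul_σy_mul_σx : σx * σy * σx = -σy := by
  ext i j; fin_cases i <;> fin_cases j <;> simp [σx, σy, mul_apply]

theorem σx_mul_σz_mul_σx : σx * σz * σx = -σz := by
  ext i j; fin_cases i <;> fin_cases j <;> simp [σx, σz, mul_apply]

theorem isHermitian_σx : IsHermitian σx := by
  ext i j; fin_cases i <;> fin_cases j <;> simp [σx]

theorem span_pauli_eq_top : span ℂ {1, σx, σy, σz} = ⊤ := by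
  refine eq_top_iff.mpr fun (A : Matrix (Fin 2) (Fin 2) ℂ) _ => ?_
  -- the coefficient of each Pauli matrix `P` is `tr (P * A) / 2`
  have hA : A = ((A 0 0 + A 1 1) / 2) • 1 + ((A 0 1 + A 1 0) / 2) • σx
      + (I * (A 0 1 - A 1 0) / 2) • σy + ((A 0 0 - A 1 1) / 2) • σz := by
    ext i j; fin_cases i <;> fin_cases j <;> simp [σx, σy, σz] <;> ring_nf <;> simp <;> ring
  rw [hA]
  refine add_mem (add_mem (add_mem ?_ ?_) ?_) ?_ <;> exact smul_mem _ _ (subset_span (by simp))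

theorem σx_kronecker_σx_mul_self : σx ⊗ₖ σx * (σx ⊗ₖ σx) = 1 := by
  rw [← mul_kronecker_mul, σx_mul_σx, one_kronecker_one]

def pauliProductsFixedByσxσx : Set (Matrix (Fin 2 × Fin 2) (Fin 2 × Fin 2) ℂ) :=
  {σx ⊗ₖ σx, σx ⊗ₖ 1, 1 ⊗ₖ σx, σy ⊗ₖ σy, σz ⊗ₖ σz, σy ⊗ₖ σz, σz ⊗ₖ σy, 1 ⊗ₖ 1}

theorem conj_σx_kronecker_σx_of_mem {ρ : Matrix (Fin 2 × Fin 2) (Fin 2 × Fin 2) ℂ}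
    (hρ : ρ ∈ pauliProductsFixedByσxσx) : σx ⊗ₖ σx * ρ * σx ⊗ₖ σx = ρ := by
  rcases hρ with rfl | rfl | rfl | rfl | rfl | rfl | rfl | rfl <;>
    simp [kronecker_mul_kronecker_mul_kronecker, σx_mul_σx, σx_mul_σy_mul_σx, σx_mul_σz_mul_σx,
      neg_kronecker, kronecker_neg, σx_kronecker_σx_mul_self]

theorem add_conj_σx_kronecker_σx_mem_span {P Q : Matrix (Fin 2) (Fin 2) ℂ}
    (hP : P ∈ ({1, σx, σy, σz} : Set _)) (hQ : Q ∈ ({1, σx, σy, σz} : Set _)) :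
    P ⊗ₖ Q + σx ⊗ₖ σx * (P ⊗ₖ Q) * σx ⊗ₖ σx ∈ span ℂ pauliProductsFixedByσxσx := by
  rw [kronecker_mul_kronecker_mul_kronecker]
  rcases hP with rfl | rfl | rfl | rfl <;> rcases hQ with rfl | rfl | rfl | rfl <;>
    simp only [mul_one, σx_mul_σx, one_mul, σx_mul_σy_mul_σx, σx_mul_σz_mul_σx, neg_kronecker,
      kronecker_neg, neg_neg, add_neg_cancel, zero_mem, ← two_smul ℂ] <;>
    exact smul_mem _ _ (subset_span (by simp [pauliProductsFixedByσxσx]))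

theorem conj_σx_kronecker_σx_eq_self_iff (ρ : Matrix (Fin 2 × Fin 2) (Fin 2 × Fin 2) ℂ) :
    σx ⊗ₖ σx * ρ * σx ⊗ₖ σx = ρ ↔ ρ ∈ span ℂ pauliProductsFixedByσxσx := by
  let conj : Matrix (Fin 2 × Fin 2) (Fin 2 × Fin 2) ℂ →ₗ[ℂ] _ :=
    LinearMap.mulLeftRight ℂ (σx ⊗ₖ σx, σx ⊗ₖ σx)
  constructor
  · intro hρ
    let sym : Matrix (Fin 2 × Fin 2) (Fin 2 × Fin 2) ℂ →ₗ[ℂ] _ := LinearMap.id + conj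
    have hρ_span : ρ ∈ span ℂ (Set.image2 (· ⊗ₖ ·) {1, σx, σy, σz} {1, σx, σy, σz}) := by
      rw [span_image2_kronecker_eq_top span_pauli_eq_top span_pauli_eq_top]; trivial
    have hsym : sym ρ ∈ span ℂ pauliProductsFixedByσxσx := by
      refine (map_span_le _ _ _).mpr ?_ (mem_map_of_mem hρ_span)
      rintro _ ⟨P, hP, Q, hQ, rfl⟩
      exact add_conj_σx_kronecker_σx_mem_span hP hQ
    have h2ρ : sym ρ = (2 : ℂ) • ρ := by simp [sym, conj, hρ, two_smul]
    simpa [h2ρ] using smul_mem _ (1 / 2 : ℂ) hsym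
  · intro hρ
    refine (span_le (p := LinearMap.eqLocus conj LinearMap.id)).mpr ?_ hρ
    exact fun _ h => conj_σx_kronecker_σx_of_mem h

open Kronecker in
/-- the kernel of the two-qubit dissipator with Lindblad operator `σx⊗σx`
is exactly the span of the eight listed operators. -/
theorem stmt14 (L : Matrix (Fin 2 × Fin 2) (Fin 2 × Fin 2) ℂ) (hLdef : L = σx ⊗ₖ σx)
    (ρ : Matrix (Fin 2 × Fin 2) (Fin 2 × Fin 2) ℂ) :
    dissipator L ρ = 0 ↔ ρ ∈ Submodule.span ℂ
      ({σx ⊗ₖ σx,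
        σx ⊗ₖ (1 : Matrix (Fin 2) (Fin 2) ℂ), (1 : Matrix (Fin 2) (Fin 2) ℂ) ⊗ₖ σx,
        σy ⊗ₖ σy, σz ⊗ₖ σz, σy ⊗ₖ σz, σz ⊗ₖ σy,
        (1 : Matrix (Fin 2) (Fin 2) ℂ) ⊗ₖ (1 : Matrix (Fin 2) (Fin 2) ℂ)} :
        Set (Matrix (Fin 2 × Fin 2) (Fin 2 × Fin 2) ℂ)) := by
  have hLL : L * L = 1 := hLdef ▸ σx_kronecker_σx_mul_self
  have hL : L.IsHermitian := hLdef ▸ isHermitian_σx.kronecker isHermitian_σx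
  rw [dissipator_eq_zero_iff_of_isHermitian_of_mul_self_eq_one hL hLL, hLdef]
  exact conj_σx_kronecker_σx_eq_self_iff ρ
end
end

section
/- Let n ≥ 3 and L = σx⊗σx + σy⊗σy + σz⊗σz ∈ M₂(ℂ)^{⊗2}. For each ordered pair of distinct sites (j, k) of an n-qubit system, let D_{j,k} denote the dissipator D_L acting on the pair of sites (j, k) (first tensor factor of L on site j, second on site k, identity elsewhere), and for a ∈ M₂(ℂ)⊗M₂(ℂ) let a_{l,m} denote a acting on the ordered pair of sites (l, m). Let a be Hermitian and swap-invariant, S·a·S = a where S is the swap matrix on ℂ²⊗ℂ². Then Σ_{j≠k} D_{j,k}( Σ_{l≠m} a_{l,m} ) = 0: the permutation-invariant sum A = Σ_{l≠m} a_{l,m} is conserved by the all-pairs Heisenberg dissipator. -/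
open Matrix Complex

noncomputable section

variable {n : ℕ}

/-- A two-site operator `b` acting on the ordered pair of (distinct) sites `(j, k)`:
first tensor factor on site `j`, second on site `k`, identity elsewhere. -/
def embPairOp [NeZero n] (j k : ZMod n) (b : QOp 2) : ROp n :=
  Matrix.of fun x y =>
    (∏ s : ZMod n, if s = j ∨ s = k then (1 : ℂ) else if x s = y s then 1 else 0) *
    b (fun i => x (if i = 0 then j else k)) (fun i => y (if i = 0 then j else k))

/-- Replace a ring configuration on the ordered pair of sites `(j, k)` by `u`. -/
def patchPair (j k : ZMod n) (x : ZMod n → Fin 2) (u : Fin 2 → Fin 2) : ZMod n → Fin 2 :=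
  fun s => if s = j then u 0 else if s = k then u 1 else x s

/-- A (linear) map `𝓛` on two-site operators acting on the ordered pair of sites `(j, k)`
of the ring and as the identity map on the tensor factors of all other sites. -/
def embPairMap [NeZero n] (j k : ZMod n) (𝓛 : QOp 2 → QOp 2) (M : ROp n) : ROp n :=
  Matrix.of fun x y =>
    (∏ s : ZMod n, if s = j ∨ s = k then (1 : ℂ) else if x s = y s then 1 else 0) *
    𝓛 (Matrix.of fun u u' => M (patchPair j k x u) (patchPair j k y u'))
      (fun i => x (if i = 0 then j else k)) (fun i => y (if i = 0 then j else k))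

/-- The swap operator on two qubits. -/
def swapM : QOp 2 :=
  Matrix.of fun x y => if x 0 = y 1 ∧ x 1 = y 0 then 1 else 0


-- ===== auxiliary lemmas =====

lemma sum_fn2 {M : Type*} [AddCommMonoid M] (F : (Fin 2 → Fin 2) → M) :
    ∑ w, F w = F ![0,0] + F ![0,1] + F ![1,0] + F ![1,1] := by
  rw [← (piFinTwoEquiv (fun _ => Fin 2)).symm.sum_comp F, Fintype.sum_prod_type]
  simp only [Fin.sum_univ_two]
  have h : ∀ a b : Fin 2, (Fin.cons a (Fin.cons b finZeroElim) : Fin 2 → Fin 2) = ![a,b] :=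
    fun a b => funext fun i => by fin_cases i <;> rfl
  simp only [piFinTwoEquiv_symm_apply, h]
  abel

lemma kron2_conjT (A B : Matrix (Fin 2) (Fin 2) ℂ) : (kron2 A B)ᴴ = kron2 Aᴴ Bᴴ := by
  ext x y; simp [kron2, conjTranspose_apply, mul_comm]

lemma hσx : σxᴴ = σx := by ext i j; fin_cases i <;> fin_cases j <;> simp [σx]
lemma hσy : σyᴴ = σy := by ext i j; fin_cases i <;> fin_cases j <;> simp [σy]
lemma hσz : σzᴴ = σz := by ext i j; fin_cases i <;> fin_cases j <;> simp [σz]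

lemma LH : (kron2 σx σx + kron2 σy σy + kron2 σz σz)ᴴ
    = kron2 σx σx + kron2 σy σy + kron2 σz σz := by
  simp [conjTranspose_add, kron2_conjT, hσx, hσy, hσz]

def Lmat : QOp 2 := Matrix.of fun x y =>
  (if x 0 = y 1 ∧ x 1 = y 0 then 2 else 0) - (if x 0 = y 0 ∧ x 1 = y 1 then 1 else 0)

lemma Lval : (kron2 σx σx + kron2 σy σy + kron2 σz σz) = Lmat := by
  ext x y
  generalize hx0 : x 0 = a; generalize hx1 : x 1 = b
  generalize hy0 : y 0 = c; generalize hy1 : y 1 = d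
  simp only [Matrix.add_apply, kron2, Lmat, Matrix.of_apply, hx0, hx1, hy0, hy1]
  fin_cases a <;> fin_cases b <;> fin_cases c <;> fin_cases d <;>
    simp [σx, σy, σz] <;> ring

set_option maxHeartbeats 1000000 in
lemma key (ρ : QOp 2) (u v : Fin 2 → Fin 2) :
    dissipator (kron2 σx σx + kron2 σy σy + kron2 σz σz) ρ u v
      = 8 * ρ ![u 1, u 0] ![v 1, v 0] - 8 * ρ u v := by
  have hu : u = ![u 0, u 1] := funext fun i => by fin_cases i <;> rfl
  have hv : v = ![v 0, v 1] := funext fun i => by fin_cases i <;> rfl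
  rw [hu, hv]
  simp only [Matrix.cons_val_zero, Matrix.cons_val_one, Matrix.head_cons]
  unfold dissipator
  rw [LH, Lval]
  generalize u 0 = a
  generalize u 1 = b
  generalize v 0 = c
  generalize v 1 = d
  fin_cases a <;> fin_cases b <;> fin_cases c <;> fin_cases d <;>
  · simp only [Matrix.add_apply, Matrix.sub_apply, Matrix.mul_apply, sum_fn2, Lmat,
      Matrix.of_apply, Matrix.cons_val_zero, Matrix.cons_val_one, Matrix.head_cons]
    norm_num
    try ring

lemma patchPair_self [NeZero n] (j k : ZMod n) (x : ZMod n → Fin 2) :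
    patchPair j k x ![x j, x k] = x := by
  funext s
  simp only [patchPair, Matrix.cons_val_zero, Matrix.cons_val_one, Matrix.head_cons]
  by_cases h1 : s = j
  · simp [h1]
  · by_cases h2 : s = k
    · subst h2
      by_cases h3 : s = j <;> simp [h3]
    · simp [h1, h2]

lemma patchPair_swapv [NeZero n] {j k : ZMod n} (hjk : j ≠ k) (x : ZMod n → Fin 2) :
    patchPair j k x ![x k, x j] = x ∘ (Equiv.swap j k) := by
  funext s
  simp only [patchPair, Matrix.cons_val_zero, Matrix.cons_val_one, Matrix.head_cons,
    Function.comp_apply]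
  by_cases h1 : s = j
  · simp [h1, Equiv.swap_apply_left]
  · by_cases h2 : s = k
    · simp [h1, h2, Equiv.swap_apply_right]
      exact fun h => absurd h.symm hjk
    · simp [h1, h2, Equiv.swap_apply_of_ne_of_ne h1 h2]

lemma embPairOp_comp [NeZero n] (l m : ZMod n) (a : QOp 2) (τ : Equiv.Perm (ZMod n))
    (x y : ZMod n → Fin 2) :
    embPairOp l m a (x ∘ τ) (y ∘ τ) = embPairOp (τ l) (τ m) a x y := by
  simp only [embPairOp, Matrix.of_apply, Function.comp_apply]
  have hx : (fun i : Fin 2 => x (τ (if i = 0 then l else m)))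
      = fun i => x (if i = 0 then τ l else τ m) := funext fun i => by fin_cases i <;> simp
  have hy : (fun i : Fin 2 => y (τ (if i = 0 then l else m)))
      = fun i => y (if i = 0 then τ l else τ m) := funext fun i => by fin_cases i <;> simp
  rw [hx, hy]
  congr 1
  refine Fintype.prod_equiv τ _ _ (fun s => ?_)
  have hiff : (s = l ∨ s = m) ↔ (τ s = τ l ∨ τ s = τ m) := by
    simp [EmbeddingLike.apply_eq_iff_eq]
  by_cases h : s = l ∨ s = m
  · rw [if_pos h, if_pos (hiff.mp h)]
  · rw [if_neg h, if_neg (fun hc => h (hiff.mpr hc))]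

lemma A_invariant [NeZero n] (a : QOp 2) (τ : Equiv.Perm (ZMod n)) (x y : ZMod n → Fin 2) :
    (∑ l : ZMod n, ∑ m : ZMod n, if l = m then (0 : ROp n) else embPairOp l m a) (x ∘ τ) (y ∘ τ)
      = (∑ l : ZMod n, ∑ m : ZMod n, if l = m then 0 else embPairOp l m a) x y := by
  simp only [Matrix.sum_apply]
  refine Fintype.sum_equiv τ _ _ (fun l => ?_)
  refine Fintype.sum_equiv τ _ _ (fun m => ?_)
  by_cases h : l = m
  · simp [h]
  · rw [if_neg h, if_neg (fun hc => h (τ.injective hc))]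
    exact embPairOp_comp l m a τ x y

lemma pair_zero [NeZero n] {j k : ZMod n} (hjk : j ≠ k) (M : ROp n)
    (hM : ∀ x y, M (x ∘ (Equiv.swap j k)) (y ∘ (Equiv.swap j k)) = M x y) :
    embPairMap j k (dissipator (kron2 σx σx + kron2 σy σy + kron2 σz σz)) M = 0 := by
  ext x y
  simp only [embPairMap, Matrix.of_apply, Matrix.zero_apply]
  rw [key]
  have h0 : (fun i : Fin 2 => x (if i = 0 then j else k)) = ![x j, x k] :=
    funext fun i => by fin_cases i <;> simp
  have h0' : (fun i : Fin 2 => y (if i = 0 then j else k)) = ![y j, y k] :=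
    funext fun i => by fin_cases i <;> simp
  rw [h0, h0']
  have h1 : (![x (if (1 : Fin 2) = 0 then j else k), x (if (0 : Fin 2) = 0 then j else k)]
      : Fin 2 → Fin 2) = ![x k, x j] := by norm_num
  have h1' : (![y (if (1 : Fin 2) = 0 then j else k), y (if (0 : Fin 2) = 0 then j else k)]
      : Fin 2 → Fin 2) = ![y k, y j] := by norm_num
  rw [h1, h1']
  simp only [Matrix.of_apply]
  rw [patchPair_self, patchPair_self, patchPair_swapv hjk, patchPair_swapv hjk, hM]
  ring

/-- for a Hermitian swap-invariant two-site operator `a`, the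
permutation-invariant sum `A = Σ_{l≠m} a_{l,m}` is conserved by the all-pairs
Heisenberg dissipator `Σ_{j≠k} D_{j,k}`. -/
theorem stmt16 (n : ℕ) [NeZero n] (hn : 3 ≤ n) (L : QOp 2)
    (hL : L = kron2 σx σx + kron2 σy σy + kron2 σz σz)
    (a : QOp 2) (ha : a.IsHermitian) (hswap : swapM * a * swapM = a) :
    ∑ j : ZMod n, ∑ k : ZMod n, (if j = k then 0 else
      embPairMap j k (dissipator L)
        (∑ l : ZMod n, ∑ m : ZMod n, if l = m then 0 else embPairOp l m a)) = 0 := by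
  apply Finset.sum_eq_zero
  intro j _
  apply Finset.sum_eq_zero
  intro k _
  by_cases h : j = k
  · rw [if_pos h]
  · rw [if_neg h]
    subst hL
    exact pair_zero h _ (fun x y => A_invariant a (Equiv.swap j k) x y)
end
end

section
/- For all μ, ν, h_x, h_y, h_z ∈ ℝ define the 3×3 real matrices A₁ = !![−4h_y²−4h_z²−μ²−ν², 4h_z², 4h_y²; 4h_z², −4h_x²−4h_z²−1−ν², 4h_x²; 4h_y², 4h_x², −4h_x²−4h_y²−1−μ²], B₁ = !![0, −√2·h_y(ν−1), −√2·h_z(μ−1); √2·h_x(μ−ν), 0, √2·h_z(μ−1); √2·h_x(ν−μ), √2·h_y(ν−1), 0], B₂ = !![−√32·h_y h_z, √8·h_x h_z, √8·h_x h_y; √8·h_y h_z, −√32·h_x h_z, √8·h_x h_y; √8·h_y h_z, √8·h_x h_z, −√32·h_x h_y], and D = diag(μ²+ν², 1+ν², 1+μ²). Let v = (1,1,1)ᵀ. Then: (i) (A₁ + D)·v = 0; (ii) B₁ᵀ·v = 0; (iii) B₂ᵀ·v = 0; (iv) vᵀ·A₁·v = −2(1 + μ² + ν²). Consequently, for any symmetric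 9×9 matrix C₁ whose first block row is (A₁, B₁, B₂), the vector (1,1,1,0,0,0,0,0,0) is annihilated by C₁ + diag(D, 0, 0) and pairs with C₁ to the strictly negative value −2(1 + μ² + ν²). -/
open Matrix Complex

noncomputable section

variable {n : ℕ}

/-- algebraic identities for the blocks `A₁, B₁, B₂` and `D` of the 9×9
quadratic-form matrix `C₁`, and their consequence for any symmetric `C₁` with first
block row `(A₁, B₁, B₂)`. -/
theorem stmt18 (μ ν hx hy hz : ℝ)
    (A₁ : Matrix (Fin 3) (Fin 3) ℝ)
    (hA₁ : A₁ = !![-4*hy^2 - 4*hz^2 - μ^2 - ν^2, 4*hz^2, 4*hy^2;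
                   4*hz^2, -4*hx^2 - 4*hz^2 - 1 - ν^2, 4*hx^2;
                   4*hy^2, 4*hx^2, -4*hx^2 - 4*hy^2 - 1 - μ^2])
    (B₁ : Matrix (Fin 3) (Fin 3) ℝ)
    (hB₁ : B₁ = !![0, -Real.sqrt 2 * (hy * (ν - 1)), -Real.sqrt 2 * (hz * (μ - 1));
                   Real.sqrt 2 * (hx * (μ - ν)), 0, Real.sqrt 2 * (hz * (μ - 1));
                   Real.sqrt 2 * (hx * (ν - μ)), Real.sqrt 2 * (hy * (ν - 1)), 0])
    (B₂ : Matrix (Fin 3) (Fin 3) ℝ)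
    (hB₂ : B₂ = !![-Real.sqrt 32 * (hy * hz), Real.sqrt 8 * (hx * hz), Real.sqrt 8 * (hx * hy);
                   Real.sqrt 8 * (hy * hz), -Real.sqrt 32 * (hx * hz), Real.sqrt 8 * (hx * hy);
                   Real.sqrt 8 * (hy * hz), Real.sqrt 8 * (hx * hz), -Real.sqrt 32 * (hx * hy)])
    (D : Matrix (Fin 3) (Fin 3) ℝ)
    (hD : D = Matrix.diagonal ![μ^2 + ν^2, 1 + ν^2, 1 + μ^2]) :
    (A₁ + D).mulVec (fun _ => 1) = 0 ∧
    B₁ᵀ.mulVec (fun _ => 1) = 0 ∧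
    B₂ᵀ.mulVec (fun _ => 1) = 0 ∧
    (fun _ => (1 : ℝ)) ⬝ᵥ A₁.mulVec (fun _ => 1) = -2 * (1 + μ^2 + ν^2) ∧
    (∀ C₁ : Matrix (Fin 3 ⊕ (Fin 3 ⊕ Fin 3)) (Fin 3 ⊕ (Fin 3 ⊕ Fin 3)) ℝ,
      C₁.IsSymm →
      (∀ i j, C₁ (Sum.inl i) (Sum.inl j) = A₁ i j) →
      (∀ i j, C₁ (Sum.inl i) (Sum.inr (Sum.inl j)) = B₁ i j) →
      (∀ i j, C₁ (Sum.inl i) (Sum.inr (Sum.inr j)) = B₂ i j) →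
      (C₁ + Matrix.fromBlocks D 0 0 0).mulVec (Sum.elim (fun _ => 1) (fun _ => 0)) = 0 ∧
      (Sum.elim (fun _ => (1 : ℝ)) (fun _ => 0)) ⬝ᵥ
          C₁.mulVec (Sum.elim (fun _ => 1) (fun _ => 0)) = -2 * (1 + μ^2 + ν^2)) := by
  have h32 : Real.sqrt 32 = 2 * Real.sqrt 8 := by
    rw [show (32:ℝ) = 2^2 * 8 by norm_num, Real.sqrt_mul (by positivity),
      Real.sqrt_sq (by norm_num)]
  subst hA₁ hB₁ hB₂ hD
  refine ⟨?_, ?_, ?_, ?_, ?_⟩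
  · funext i
    fin_cases i <;>
      simp [Matrix.mulVec, dotProduct, Fin.sum_univ_three, Matrix.diagonal] <;> ring
  · funext j
    fin_cases j <;>
      simp [Matrix.mulVec, dotProduct, Fin.sum_univ_three, Matrix.transpose] <;> ring
  · funext j
    fin_cases j <;>
      simp [Matrix.mulVec, dotProduct, Fin.sum_univ_three, Matrix.vecHead, Matrix.vecTail, h32] <;> ring
  · simp [Matrix.mulVec, dotProduct, Fin.sum_univ_three]
    ring
  · intro C₁ hsym h1 h2 h3
    have hsym' : ∀ i j, C₁ j i = C₁ i j := fun i j => hsym.apply i j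
    constructor
    · funext i
      cases i with
      | inl i =>
        simp [Matrix.mulVec, dotProduct, Fintype.sum_sum_type, Fin.sum_univ_three,
          h1, h2, h3, Matrix.fromBlocks, Matrix.diagonal]
        fin_cases i <;> simp <;> ring
      | inr k =>
        cases k with
        | inl k =>
          simp only [Matrix.mulVec, dotProduct, Fintype.sum_sum_type,
            Sum.elim_inl, Sum.elim_inr, mul_one, mul_zero, Finset.sum_const_zero, add_zero,
            Matrix.add_apply, Matrix.fromBlocks_apply₂₁, Matrix.fromBlocks_apply₂₂,
            Matrix.zero_apply, Pi.zero_apply]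
          rw [Finset.sum_congr rfl (fun j _ => by rw [hsym' (Sum.inl j) _, h2])]
          fin_cases k <;>
            simp [Fin.sum_univ_three] <;> ring
        | inr k =>
          simp only [Matrix.mulVec, dotProduct, Fintype.sum_sum_type,
            Sum.elim_inl, Sum.elim_inr, mul_one, mul_zero, Finset.sum_const_zero, add_zero,
            Matrix.add_apply, Matrix.fromBlocks_apply₂₁, Matrix.fromBlocks_apply₂₂,
            Matrix.zero_apply, Pi.zero_apply]
          rw [Finset.sum_congr rfl (fun j _ => by rw [hsym' (Sum.inl j) _, h3])]
          fin_cases k <;>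
            simp [Fin.sum_univ_three, Matrix.vecHead, Matrix.vecTail, h32] <;> ring
    · simp only [Matrix.mulVec, dotProduct, Fintype.sum_sum_type,
        Sum.elim_inl, Sum.elim_inr, mul_one, mul_zero, zero_mul, Finset.sum_const_zero,
        add_zero, one_mul]
      rw [Finset.sum_congr rfl (fun i _ => Finset.sum_congr rfl (fun j _ => h1 i j))]
      simp [Fin.sum_univ_three]
      ring
end
end
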